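/- arXiv:2202.11848 — 6 statements merged into one kernel-verified Lean document; each statement's English description precedes it below -/
import Mathlib

section
/- For all real a > 0 and all complex λ with Re(λ) > 0 (or more generally λ ∈ ℂ ∖ (-∞, -a]), the identity λ/√(λ + a) = ∫_{(a,∞)} (λ/(λ + u)) · (1/(π√(u - a))) du holds, where √ denotes the principal branch of the square root. -/
/-!
Put `s = √(λ + a)`, so that `Re s > 0` and `s² = λ + a`. The substitution `u = a + t²` turns the
integral into `(2λ/π) ∫₀^∞ dt / (s² + t²)`, and this last integral equals `π / (2s)`: the function
`arctan (t / s) / s = (-i / 2s) (log (s + it) - log (s - it))` is an antiderivative vanishing at `0`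
and tending to `π / (2s)`.
-/

open MeasureTheory Complex Asymptotics Filter Set Topology

namespace Complex

lemma mem_slitPlane_of_forall_ne {z : ℂ} (h : ∀ x : ℝ, x ≤ 0 → z ≠ x) : z ∈ slitPlane := by
  refine mem_slitPlane_iff_not_le_zero.2 fun hle => ?_
  obtain ⟨hre, him⟩ := le_def.1 hle
  exact h z.re hre (ext rfl (by simpa using him))

lemma add_ofReal_mul_I_mem_slitPlane {s : ℂ} (hs : 0 < s.re) (t : ℝ) : s + t * I ∈ slitPlane :=
  mem_slitPlane_iff.2 (Or.inl (by simpa using hs))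

lemma sub_ofReal_mul_I_mem_slitPlane {s : ℂ} (hs : 0 < s.re) (t : ℝ) : s - t * I ∈ slitPlane := by
  simpa [sub_eq_add_neg] using add_ofReal_mul_I_mem_slitPlane hs (-t)

lemma sq_add_sq_eq_mul (s t : ℂ) : s ^ 2 + t ^ 2 = (s + t * I) * (s - t * I) := by
  linear_combination t ^ 2 * I_sq

lemma sq_add_sq_ne_zero {s : ℂ} (hs : 0 < s.re) (t : ℝ) : s ^ 2 + (t : ℂ) ^ 2 ≠ 0 := by
  rw [sq_add_sq_eq_mul]
  exact mul_ne_zero (slitPlane_ne_zero (add_ofReal_mul_I_mem_slitPlane hs t))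
    (slitPlane_ne_zero (sub_ofReal_mul_I_mem_slitPlane hs t))

lemma re_cpow_one_half_pos {z : ℂ} (hz : z ∈ slitPlane) : 0 < (z ^ (1 / 2 : ℂ)).re := by
  obtain ⟨harg, hz0⟩ := mem_slitPlane_iff_arg.1 hz
  have him : (log z * (1 / 2)).im = z.arg / 2 := by simp [log_im, div_eq_mul_inv]
  rw [cpow_def_of_ne_zero hz0, exp_re, him]
  have hcos : 0 < Real.cos (z.arg / 2) := Real.cos_pos_of_mem_Ioo
    ⟨by linarith [neg_pi_lt_arg z], by linarith [lt_of_le_of_ne (arg_le_pi z) harg]⟩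
  positivity

section ArctanIntegral

variable {s : ℂ}

lemma hasDerivAt_log_sub_log (hs : 0 < s.re) (t : ℝ) :
    HasDerivAt (fun t : ℝ => -I / (2 * s) * (log (s + t * I) - log (s - t * I)))
      (s ^ 2 + (t : ℂ) ^ 2)⁻¹ t := by
  have hplus : HasDerivAt (fun u : ℝ => s + (u : ℂ) * I) I t := by
    simpa using ((hasDerivAt_id (t : ℂ)).comp_ofReal.mul_const I).const_add s
  have hminus : HasDerivAt (fun u : ℝ => s - (u : ℂ) * I) (-I) t := by
    simpa using ((hasDerivAt_id (t : ℂ)).comp_ofReal.mul_const I).const_sub s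
  refine (((hplus.clog_real (add_ofReal_mul_I_mem_slitPlane hs t)).sub
    (hminus.clog_real (sub_ofReal_mul_I_mem_slitPlane hs t))).const_mul (-I / (2 * s))).congr_deriv ?_
  have h1 := slitPlane_ne_zero (add_ofReal_mul_I_mem_slitPlane hs t)
  have h2 := slitPlane_ne_zero (sub_ofReal_mul_I_mem_slitPlane hs t)
  have hs0 := ne_zero_of_re_pos hs
  rw [sq_add_sq_eq_mul]
  have hsum : (s + t * I) + (s - t * I) = 2 * s := by ring
  generalize s + t * I = A at h1 hsum ⊢
  generalize s - t * I = B at h2 hsum ⊢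
  field_simp
  linear_combination -I ^ 2 * hsum - 2 * s * I_sq

lemma tendsto_log_sub_log_atTop (hs : 0 < s.re) :
    Tendsto (fun t : ℝ => -I / (2 * s) * (log (s + t * I) - log (s - t * I))) atTop
      (𝓝 (Real.pi / (2 * s))) := by
  have hsmall : Tendsto (fun t : ℝ => s / (t : ℂ)) atTop (𝓝 0) := by
    simpa [div_eq_mul_inv] using (tendsto_inv_atTop_zero.ofReal).const_mul s
  have hlog : Tendsto (fun t : ℝ => -I / (2 * s) * (log (s / t + I) - log (s / t - I))) atTop
      (𝓝 (-I / (2 * s) * (log I - log (-I)))) := by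
    refine ((((continuousAt_clog ?_).tendsto.comp ?_).sub
      ((continuousAt_clog ?_).tendsto.comp ?_))).const_mul _
    · simp [mem_slitPlane_iff]
    · simpa using hsmall.add_const I
    · simp [mem_slitPlane_iff]
    · simpa using hsmall.sub_const I
  have hval : -I / (2 * s) * (log I - log (-I)) = Real.pi / (2 * s) := by
    rw [log_I, log_neg_I]
    field_simp [ne_zero_of_re_pos hs]
    linear_combination (-2 : ℂ) * I_sq
  rw [hval] at hlog
  refine hlog.congr' ?_
  filter_upwards [eventually_gt_atTop 0] with t ht
  have ht0 : (t : ℂ) ≠ 0 := ofReal_ne_zero.2 ht.ne'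
  have hplus : s + t * I = t * (s / t + I) := by field_simp
  have hminus : s - t * I = t * (s / t - I) := by field_simp
  have h1 : s / t + I ≠ 0 :=
    right_ne_zero_of_mul (hplus ▸ slitPlane_ne_zero (add_ofReal_mul_I_mem_slitPlane hs t))
  have h2 : s / t - I ≠ 0 :=
    right_ne_zero_of_mul (hminus ▸ slitPlane_ne_zero (sub_ofReal_mul_I_mem_slitPlane hs t))
  rw [hplus, hminus, log_ofReal_mul ht h1, log_ofReal_mul ht h2]
  ring

lemma integrableOn_inv_sq_add_sq (hs : 0 < s.re) :
    IntegrableOn (fun t : ℝ => (s ^ 2 + (t : ℂ) ^ 2)⁻¹) (Ioi 0) := by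
  have hcont : Continuous fun t : ℝ => (s ^ 2 + (t : ℂ) ^ 2)⁻¹ :=
    (continuous_const.add (continuous_ofReal.pow 2)).inv₀ (sq_add_sq_ne_zero hs)
  have hequiv : (fun t : ℝ => s ^ 2 + (t : ℂ) ^ 2) ~[atTop] fun t => (t : ℂ) ^ 2 := by
    refine IsLittleO.add_isEquivalent (isLittleO_const_left.2 (Or.inr ?_)) IsEquivalent.refl
    simp [Function.comp_def]
  have hpow : (fun t : ℝ => ((t : ℂ) ^ 2)⁻¹) =O[atTop] fun t : ℝ => t ^ (-2 : ℝ) := by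
    refine IsBigO.of_bound 1 ?_
    filter_upwards [eventually_gt_atTop 0] with t ht
    simp [Real.rpow_neg ht.le, abs_of_pos ht]
  exact ((hcont.locallyIntegrable.locallyIntegrableOn (Ici 0)).integrableOn_of_isBigO_atTop
    (hequiv.inv.isBigO.trans hpow) (integrableAtFilter_rpow_atTop_iff.2 (by norm_num))).mono_set
    Ioi_subset_Ici_self

lemma integral_Ioi_inv_sq_add_sq (hs : 0 < s.re) :
    ∫ t in Ioi (0 : ℝ), (s ^ 2 + (t : ℂ) ^ 2)⁻¹ = Real.pi / (2 * s) := by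
  rw [integral_Ioi_of_hasDerivAt_of_tendsto' (fun t _ => hasDerivAt_log_sub_log hs t)
    (integrableOn_inv_sq_add_sq hs) (tendsto_log_sub_log_atTop hs)]
  simp

end ArctanIntegral

end Complex

theorem integral_comp_add_sq_Ioi {E : Type*} [NormedAddCommGroup E] [NormedSpace ℝ E]
    (a : ℝ) (f : ℝ → E) :
    ∫ t in Ioi 0, (2 * t) • f (a + t ^ 2) = ∫ u in Ioi a, f u := by
  have himage : (fun t : ℝ => a + t ^ 2) '' Ioi 0 = Ioi a := by
    ext u
    refine ⟨?_, fun hu => ⟨√(u - a), Real.sqrt_pos.2 (sub_pos.2 hu), ?_⟩⟩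
    · rintro ⟨t, ht, rfl⟩
      exact lt_add_of_pos_right a (pow_pos ht 2)
    · simp [Real.sq_sqrt (sub_pos.2 hu).le]
  have hderiv (t : ℝ) (_ : t ∈ Ioi 0) :
      HasDerivWithinAt (fun t : ℝ => a + t ^ 2) (2 * t) (Ioi 0) t := by
    simpa using ((hasDerivAt_pow 2 t).const_add a).hasDerivWithinAt
  have hinj : InjOn (fun t : ℝ => a + t ^ 2) (Ioi 0) := fun x hx y hy h =>
    (pow_left_inj₀ (le_of_lt hx) (le_of_lt hy) two_ne_zero).1 (add_left_cancel h)
  rw [← himage, integral_image_eq_integral_abs_deriv_smul measurableSet_Ioi hderiv hinj]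
  refine setIntegral_congr_fun measurableSet_Ioi fun t ht => ?_
  rw [abs_of_pos (mul_pos two_pos ht)]

theorem stmt6_general (a : ℝ) (lam : ℂ)
    (hlam : ∀ x : ℝ, x ≤ -a → lam ≠ (x : ℂ)) :
    lam / (lam + (a : ℂ)) ^ ((1 : ℂ) / 2)
      = ∫ u in Set.Ioi a,
          (lam / (lam + (u : ℂ))) * ((1 / (Real.pi * Real.sqrt (u - a)) : ℝ) : ℂ) := by
  have hslit : lam + a ∈ slitPlane := mem_slitPlane_of_forall_ne fun x hx h =>
    hlam (x - a) (by linarith) (by push_cast; linear_combination h)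
  set s := (lam + a) ^ ((1 : ℂ) / 2)
  have hs : 0 < s.re := re_cpow_one_half_pos hslit
  have hs2 : s ^ 2 = lam + a := by
    simp only [s, one_div]
    exact cpow_ofNat_inv_pow _ 2
  rw [← integral_comp_add_sq_Ioi]
  calc lam / s = 2 * lam / Real.pi * (Real.pi / (2 * s)) := by
        field_simp [ne_zero_of_re_pos hs]
    _ = ∫ t in Ioi (0 : ℝ), 2 * lam / Real.pi * (s ^ 2 + (t : ℂ) ^ 2)⁻¹ := by
        rw [integral_const_mul, integral_Ioi_inv_sq_add_sq hs]
    _ = _ := by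
        refine setIntegral_congr_fun measurableSet_Ioi fun t (ht : 0 < t) => ?_
        have ht0 : (t : ℂ) ≠ 0 := ofReal_ne_zero.2 ht.ne'
        simp only [add_sub_cancel_left, Real.sqrt_sq ht.le, hs2, real_smul]
        push_cast
        rw [← add_assoc]
        field_simp

/-- Stieltjes representation of the complete Bernstein function `λ ↦ λ/√(λ+a)`. -/
theorem stmt6 (a : ℝ) (ha : 0 < a) (lam : ℂ)
    (hlam : ∀ x : ℝ, x ≤ -a → lam ≠ (x : ℂ)) :
    lam / (lam + (a : ℂ)) ^ ((1 : ℂ) / 2)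
      = ∫ u in Set.Ioi a,
          (lam / (lam + (u : ℂ))) * ((1 / (Real.pi * Real.sqrt (u - a)) : ℝ) : ℂ) :=
  stmt6_general a lam hlam
end

section
/- For every t > 0, c > 0, and z ∈ ℂ with Im(z) < 0 (or more generally z ∉ [1/(4c), ∞)), one has ∫_0^{4c} (1/(1 - xz) - 1) · (t √(x(4c - x)))/(2π x²) dx = t(1 - √(1 - 4cz))/2, where √ is the principal branch. -/
/-!
Substituting `x = 4c u²/(1+u²)` rationalises `√(x(4c-x))` and, with `w = 1 - 4cz`, turns the
integrand into `(t/π)((1+u²)⁻¹ - w(1+wu²)⁻¹)` on `u > 0`. For `w` off the cut `(-∞, 0]` put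
`s = √w`, so `Re s > 0`; then `(log(1+isu) - log(1-isu))/(2is)` is an antiderivative of
`(1+wu²)⁻¹` along the whole real line, and its limit at `+∞` is `π/(2s)` because
`arg(is) - arg(-is) = π`. Hence the integral is `(t/π)(π/2 - wπ/(2s)) = t(1-s)/2`.
-/

open MeasureTheory Set Filter Topology Complex
open scoped Real

lemma Complex.mem_slitPlane_of_im_ne_zero {z : ℂ} (hz : z.im ≠ 0) : z ∈ slitPlane :=
  mem_slitPlane_iff.2 (Or.inr hz)

lemma Complex.re_cpow_inv_two_pos {w : ℂ} (hw : w ∈ slitPlane) : 0 < (w ^ (2⁻¹ : ℂ)).re := by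
  rw [cpow_inv_two_re, Real.sqrt_pos]
  rcases mem_slitPlane_iff.1 hw with h | h
  · linarith [norm_nonneg w]
  · linarith [abs_re_lt_norm.2 h, neg_abs_le w.re]

lemma one_add_mul_ofReal_mem_slitPlane {b : ℂ} (hb : b.im ≠ 0) (u : ℝ) :
    1 + b * u ∈ slitPlane := by
  rcases eq_or_ne u 0 with rfl | hu
  · simp
  · exact mem_slitPlane_of_im_ne_zero (by simpa using mul_ne_zero hb hu)

lemma one_add_mul_ofReal_sq_ne_zero {w : ℂ} (hw : w ∈ slitPlane) (u : ℝ) :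
    1 + w * (u : ℂ) ^ 2 ≠ 0 := by
  intro h
  have hre : 1 + w.re * u ^ 2 = 0 := by simpa [sq] using congrArg re h
  have him : w.im * u ^ 2 = 0 := by simpa [sq] using congrArg im h
  have hu : u ^ 2 ≠ 0 := by rintro hu; simp [hu] at hre
  rcases mem_slitPlane_iff.1 hw with h' | h'
  · nlinarith [sq_nonneg u]
  · exact h' (by simpa [hu] using him)

lemma hasDerivAt_log_one_add_mul_sub_log_one_sub_mul {b : ℂ} (hb : b.im ≠ 0) (u : ℝ) :
    HasDerivAt (fun u : ℝ => log (1 + b * u) - log (1 - b * u))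
      (2 * b * (1 - (b * u) ^ 2)⁻¹) u := by
  have hplus := one_add_mul_ofReal_mem_slitPlane hb u
  have hminus : 1 - b * u ∈ slitPlane := by
    simpa [sub_eq_add_neg] using one_add_mul_ofReal_mem_slitPlane (b := -b) (by simpa using hb) u
  have hlin : HasDerivAt (fun u : ℝ => b * u) b u := by
    simpa using (hasDerivAt_id u).ofReal_comp.const_mul b
  refine (((hlin.const_add 1).clog_real hplus).sub
    ((hlin.const_sub 1).clog_real hminus)).congr_deriv ?_
  rw [show 1 - ((b : ℂ) * u) ^ 2 = (1 + b * u) * (1 - b * u) by ring]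
  field_simp [slitPlane_ne_zero hplus, slitPlane_ne_zero hminus]
  ring

lemma log_sub_log_neg_of_im_pos {b : ℂ} (hb : 0 < b.im) : log b - log (-b) = π * I := by
  apply Complex.ext
  · simp [log_re]
  · simp [log_im, arg_neg_eq_arg_sub_pi_of_im_pos hb]

lemma tendsto_log_one_add_mul_sub_log_one_sub_mul {b : ℂ} (hb : 0 < b.im) :
    Tendsto (fun u : ℝ => log (1 + b * u) - log (1 - b * u)) atTop (𝓝 (π * I)) := by
  have hinv : Tendsto (fun u : ℝ => ((u : ℂ))⁻¹) atTop (𝓝 0) := by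
    simpa [Function.comp_def] using
      (continuous_ofReal.tendsto 0).comp (tendsto_inv_atTop_zero (𝕜 := ℝ))
  have hlim : Tendsto (fun u : ℝ => log ((u : ℂ)⁻¹ + b) - log ((u : ℂ)⁻¹ - b)) atTop
      (𝓝 (log b - log (-b))) := by
    have hneg : -b ∈ slitPlane := mem_slitPlane_of_im_ne_zero (by simpa using hb.ne')
    refine (((continuousAt_clog (mem_slitPlane_of_im_ne_zero hb.ne')).tendsto.comp ?_)).sub
      ((continuousAt_clog hneg).tendsto.comp ?_)
    · simpa using hinv.add_const b
    · simpa using hinv.sub_const b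
  rw [← log_sub_log_neg_of_im_pos hb]
  refine hlim.congr' ?_
  filter_upwards [eventually_gt_atTop 0] with u hu
  have hu' : (u : ℂ) ≠ 0 := ofReal_ne_zero.2 hu.ne'
  have hplus : 1 + b * u = u * ((u : ℂ)⁻¹ + b) := by field_simp
  have hminus : 1 - b * u = u * ((u : ℂ)⁻¹ - b) := by field_simp
  rw [hplus, hminus, log_ofReal_mul hu, log_ofReal_mul hu]
  · ring
  · exact slitPlane_ne_zero (mem_slitPlane_of_im_ne_zero (by simpa using hb.ne'))
  · exact slitPlane_ne_zero (mem_slitPlane_of_im_ne_zero (by simpa using hb.ne'))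

lemma norm_inv_one_add_mul_sq_le {w : ℂ} (hw : w ≠ 0) {u : ℝ} (hu : 2 / ‖w‖ ≤ u ^ 2) :
    ‖(1 + w * (u : ℂ) ^ 2)⁻¹‖ ≤ 2 / ‖w‖ * (u ^ 2)⁻¹ := by
  have hw' : 0 < ‖w‖ := norm_pos_iff.2 hw
  have hu2 : 0 < u ^ 2 := lt_of_lt_of_le (by positivity) hu
  have hlower : ‖w‖ * u ^ 2 / 2 ≤ ‖1 + w * (u : ℂ) ^ 2‖ := by
    have htri := norm_sub_le (1 + w * (u : ℂ) ^ 2) 1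
    simp only [add_sub_cancel_left, norm_mul, norm_pow, norm_real, Real.norm_eq_abs, sq_abs,
      norm_one] at htri
    have : 2 ≤ ‖w‖ * u ^ 2 := by rwa [div_le_iff₀ hw', mul_comm] at hu
    linarith
  calc ‖(1 + w * (u : ℂ) ^ 2)⁻¹‖ ≤ (‖w‖ * u ^ 2 / 2)⁻¹ := by
        rw [norm_inv]; exact inv_anti₀ (by positivity) hlower
    _ = 2 / ‖w‖ * (u ^ 2)⁻¹ := by field_simp

lemma integrableOn_Ioi_inv_one_add_mul_sq {w : ℂ} (hw : w ∈ slitPlane) :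
    IntegrableOn (fun u : ℝ => (1 + w * (u : ℂ) ^ 2)⁻¹) (Ioi 0) := by
  have hcont : Continuous fun u : ℝ => (1 + w * (u : ℂ) ^ 2)⁻¹ :=
    (by fun_prop : Continuous fun u : ℝ => 1 + w * (u : ℂ) ^ 2).inv₀
      (one_add_mul_ofReal_sq_ne_zero hw)
  have hbigO : (fun u : ℝ => (1 + w * (u : ℂ) ^ 2)⁻¹) =O[atTop] fun u : ℝ => u ^ (-2 : ℝ) := by
    refine Asymptotics.IsBigO.of_bound (2 / ‖w‖) ?_
    filter_upwards [(tendsto_pow_atTop two_ne_zero).eventually_ge_atTop (2 / ‖w‖),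
      eventually_gt_atTop 0] with u hu hu0
    rw [Real.norm_of_nonneg (by positivity), Real.rpow_neg hu0.le, Real.rpow_two]
    exact norm_inv_one_add_mul_sq_le (slitPlane_ne_zero hw) hu
  exact ((hcont.locallyIntegrable.locallyIntegrableOn (Ici 0)).integrableOn_of_isBigO_atTop hbigO
    (integrableAtFilter_rpow_atTop_iff.2 (by norm_num))).mono_set Ioi_subset_Ici_self

theorem integral_Ioi_inv_one_add_mul_sq {w : ℂ} (hw : w ∈ slitPlane) :
    ∫ u in Ioi (0 : ℝ), (1 + w * (u : ℂ) ^ 2)⁻¹ = π / (2 * w ^ (2⁻¹ : ℂ)) := by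
  set s := w ^ (2⁻¹ : ℂ)
  have hsw : s ^ 2 = w := cpow_ofNat_inv_pow w 2
  have hs : 0 < (I * s).im := by simpa using re_cpow_inv_two_pos hw
  have hs0 : s ≠ 0 := by rintro h; simp [h] at hs
  have hderiv : ∀ u ∈ Ici (0 : ℝ), HasDerivAt
      (fun u : ℝ => (log (1 + I * s * u) - log (1 - I * s * u)) / (2 * I * s))
      (1 + w * (u : ℂ) ^ 2)⁻¹ u := by
    intro u _
    refine ((hasDerivAt_log_one_add_mul_sub_log_one_sub_mul hs.ne' u).div_const _).congr_deriv ?_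
    rw [← hsw, mul_pow, mul_pow, I_sq]
    field_simp
    ring_nf
  rw [integral_Ioi_of_hasDerivAt_of_tendsto' hderiv (integrableOn_Ioi_inv_one_add_mul_sq hw)
    ((tendsto_log_one_add_mul_sub_log_one_sub_mul hs).div_const _)]
  field_simp
  simp

section Substitution

variable {a : ℝ}

lemma image_mul_sq_div_one_add_sq_Ioi (ha : 0 < a) :
    (fun u : ℝ => a * u ^ 2 / (1 + u ^ 2)) '' Ioi 0 = Ioo 0 a := by
  ext x
  constructor
  · rintro ⟨u, hu, rfl⟩
    have hu : 0 < u := hu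
    refine ⟨by positivity, ?_⟩
    rw [div_lt_iff₀ (by positivity)]
    linarith
  · rintro ⟨hx0, hxa⟩
    have hax : 0 < a - x := by linarith
    refine ⟨√(x / (a - x)), Real.sqrt_pos.2 (by positivity), ?_⟩
    simp only [Real.sq_sqrt (by positivity : 0 ≤ x / (a - x))]
    field_simp
    ring

lemma strictMonoOn_mul_sq_div_one_add_sq (ha : 0 < a) :
    StrictMonoOn (fun u : ℝ => a * u ^ 2 / (1 + u ^ 2)) (Ioi 0) := by
  intro u hu v hv huv
  have hu : 0 < u := hu
  simp only
  rw [div_lt_div_iff₀ (by positivity) (by positivity)]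
  nlinarith [mul_lt_mul'' huv huv hu.le hu.le]

lemma hasDerivAt_mul_sq_div_one_add_sq (u : ℝ) :
    HasDerivAt (fun u : ℝ => a * u ^ 2 / (1 + u ^ 2)) (2 * a * u / (1 + u ^ 2) ^ 2) u := by
  have hnum : HasDerivAt (fun u : ℝ => a * u ^ 2) (a * (2 * u)) u := by
    simpa using (hasDerivAt_pow 2 u).const_mul a
  have hden : HasDerivAt (fun u : ℝ => 1 + u ^ 2) (2 * u) u := by
    simpa using (hasDerivAt_pow 2 u).const_add 1
  refine (hnum.div hden (by positivity)).congr_deriv ?_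
  field_simp
  ring

theorem integral_Ioo_eq_integral_Ioi_mul_sq_div_one_add_sq {E : Type*} [NormedAddCommGroup E]
    [NormedSpace ℝ E] (ha : 0 < a) (g : ℝ → E) :
    ∫ x in Ioo 0 a, g x =
      ∫ u in Ioi 0, (2 * a * u / (1 + u ^ 2) ^ 2) • g (a * u ^ 2 / (1 + u ^ 2)) := by
  rw [← image_mul_sq_div_one_add_sq_Ioi ha, integral_image_eq_integral_abs_deriv_smul
    measurableSet_Ioi (fun u _ => (hasDerivAt_mul_sq_div_one_add_sq u).hasDerivWithinAt)
    (strictMonoOn_mul_sq_div_one_add_sq ha).injOn]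
  refine setIntegral_congr_fun measurableSet_Ioi fun u (hu : 0 < u) => ?_
  rw [abs_of_pos (by positivity)]

end Substitution

noncomputable def freeGammaLevyDensity (t c x : ℝ) : ℝ := t * √(x * (4 * c - x)) / (2 * π * x ^ 2)

section LevyIntegrand

variable {t c u : ℝ}

lemma mul_freeGammaLevyDensity_mul_sq_div_one_add_sq (hc : 0 < c) (hu : 0 < u) :
    2 * (4 * c) * u / (1 + u ^ 2) ^ 2 * freeGammaLevyDensity t c (4 * c * u ^ 2 / (1 + u ^ 2)) =
      t / (π * u ^ 2 * (1 + u ^ 2)) := by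
  have hsqrt : √(4 * c * u ^ 2 / (1 + u ^ 2) * (4 * c - 4 * c * u ^ 2 / (1 + u ^ 2))) =
      4 * c * u / (1 + u ^ 2) := by
    rw [Real.sqrt_eq_iff_mul_self_eq_of_pos (by positivity)]
    field_simp
    ring
  rw [freeGammaLevyDensity, hsqrt]
  field_simp

lemma one_div_one_sub_mul_sq_div_one_add_sq_sub_one {z : ℂ}
    (hne : 1 + (1 - 4 * c * z) * (u : ℂ) ^ 2 ≠ 0) :
    1 / (1 - ((4 * c * u ^ 2 / (1 + u ^ 2) : ℝ) : ℂ) * z) - 1 =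
      4 * c * z * u ^ 2 / (1 + (1 - 4 * c * z) * (u : ℂ) ^ 2) := by
  have h1 : (1 : ℂ) + u ^ 2 ≠ 0 := by exact_mod_cast (by positivity : (1 : ℝ) + u ^ 2 ≠ 0)
  have hfactor : 1 - ((4 * c * u ^ 2 / (1 + u ^ 2) : ℝ) : ℂ) * z =
      (1 + (1 - 4 * c * z) * (u : ℂ) ^ 2) / (1 + u ^ 2) := by
    push_cast
    field_simp
    ring
  rw [hfactor]
  field_simp
  ring

end LevyIntegrand

theorem integral_Ioo_one_div_one_sub_mul_sub_one_mul_freeGammaLevyDensity {t c : ℝ} (hc : 0 < c)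
    {z : ℂ} (hz : 1 - 4 * c * z ∈ slitPlane) :
    ∫ x in Ioo 0 (4 * c), (1 / (1 - (x : ℂ) * z) - 1) * (freeGammaLevyDensity t c x : ℂ) =
      t * (1 - (1 - 4 * c * z) ^ (2⁻¹ : ℂ)) / 2 := by
  have hpoint : ∀ u ∈ Ioi (0 : ℝ),
      (2 * (4 * c) * u / (1 + u ^ 2) ^ 2) •
        ((1 / (1 - ((4 * c * u ^ 2 / (1 + u ^ 2) : ℝ) : ℂ) * z) - 1) *
          (freeGammaLevyDensity t c (4 * c * u ^ 2 / (1 + u ^ 2)) : ℂ)) =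
      t / π * ((1 + 1 * (u : ℂ) ^ 2)⁻¹ -
        (1 - 4 * c * z) * (1 + (1 - 4 * c * z) * (u : ℂ) ^ 2)⁻¹) := by
    intro u (hu : 0 < u)
    have hne := one_add_mul_ofReal_sq_ne_zero hz u
    have h1 : (1 : ℂ) + u ^ 2 ≠ 0 := by exact_mod_cast (by positivity : (1 : ℝ) + u ^ 2 ≠ 0)
    rw [one_div_one_sub_mul_sq_div_one_add_sq_sub_one hne, real_smul, mul_left_comm, ← ofReal_mul,
      mul_freeGammaLevyDensity_mul_sq_div_one_add_sq hc hu]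
    have hu0 : (u : ℂ) ≠ 0 := ofReal_ne_zero.2 hu.ne'
    have hπ : (π : ℂ) ≠ 0 := ofReal_ne_zero.2 Real.pi_ne_zero
    push_cast
    generalize hD : 1 + (1 - 4 * c * z) * (u : ℂ) ^ 2 = D at hne ⊢
    field_simp
    rw [← hD]
    ring
  rw [integral_Ioo_eq_integral_Ioi_mul_sq_div_one_add_sq (by positivity),
    setIntegral_congr_fun measurableSet_Ioi hpoint, integral_const_mul,
    integral_sub (integrableOn_Ioi_inv_one_add_mul_sq one_mem_slitPlane)
      ((integrableOn_Ioi_inv_one_add_mul_sq hz).const_mul _),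
    integral_const_mul, integral_Ioi_inv_one_add_mul_sq one_mem_slitPlane,
    integral_Ioi_inv_one_add_mul_sq hz, one_cpow]
  have hsw : ((1 - 4 * c * z) ^ (2⁻¹ : ℂ)) ^ 2 = 1 - 4 * c * z := cpow_ofNat_inv_pow _ 2
  have hs0 : (1 - 4 * c * z) ^ (2⁻¹ : ℂ) ≠ 0 := fun h =>
    slitPlane_ne_zero hz (by rw [← hsw, h]; simp)
  generalize (1 - 4 * c * z) ^ (2⁻¹ : ℂ) = s at hsw hs0 ⊢
  field_simp
  linear_combination (t : ℂ) * hsw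

theorem stmt8_general (t c : ℝ) (hc : 0 < c) (z : ℂ) (hz : z.im < 0) :
    ∫ x in Set.Ioo (0 : ℝ) (4 * c),
        (1 / (1 - (x : ℂ) * z) - 1) *
          ((t * Real.sqrt (x * (4 * c - x)) / (2 * Real.pi * x ^ 2) : ℝ) : ℂ)
      = (t : ℂ) * (1 - (1 - 4 * (c : ℂ) * z) ^ ((1 : ℂ) / 2)) / 2 := by
  have hslit : 1 - 4 * (c : ℂ) * z ∈ slitPlane :=
    mem_slitPlane_of_im_ne_zero (by simp [hc.ne', hz.ne])
  rw [one_div (2 : ℂ)]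
  exact integral_Ioo_one_div_one_sub_mul_sub_one_mul_freeGammaLevyDensity hc hslit

/-- The free cumulant transform of the free gamma distribution `γ(t,c)` computed
from its free Lévy measure. -/
theorem stmt8 (t c : ℝ) (ht : 0 < t) (hc : 0 < c) (z : ℂ) (hz : z.im < 0) :
    ∫ x in Set.Ioo (0 : ℝ) (4 * c),
        (1 / (1 - (x : ℂ) * z) - 1) *
          ((t * Real.sqrt (x * (4 * c - x)) / (2 * Real.pi * x ^ 2) : ℝ) : ℂ)
      = (t : ℂ) * (1 - (1 - 4 * (c : ℂ) * z) ^ ((1 : ℂ) / 2)) / 2 :=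
  stmt8_general t c hc z hz
end

section
/- For z in the lower half-plane ℂ⁻ (avoiding the branch cut), the identity z/√(1 - 4z) = (1/2) ∫_0^4 (1/(1 - xz) - 1) · 2/(π x √(x(4 - x))) dx holds, where √ denotes the principal branch. Consequently the measure (1/(π x √(x(4-x)))) 1_{(0,4)}(x) dx represents the function z ↦ z(1-4z)^{-1/2} as a free-Lévy-type integral. -/
/-!
Put `w = (1 - c z) ^ (1/2)`, so `Re w > 0`, and `u = √(x / (c - x))`. Since
`1 + (w u)² = c (1 - x z) / (c - x)`, the integrand `((1 - x z) √(x (c - x)))⁻¹` is the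
derivative of `(2 / w) arctan (w u)` on `(0, c)`: this is the substitution `x = c u² / (1 + u²)`,
which turns the integral into `∫₀^∞ 2 du / (1 + w² u²)`. As `x → c⁻`, `w u` tends to infinity
inside the right half-plane, where `arctan ζ + arctan ζ⁻¹ = π / 2` gives the boundary value
`π / w`. For `c = 4` the integrand of the theorem is `2 z / π` times this one.
-/

open MeasureTheory Complex Set Filter Topology
open scoped Real

namespace Complex

lemma one_add_mul_I_div_one_sub_mul_I_mem_slitPlane {z : ℂ} (hz : 0 < z.re) :
    (1 + z * I) / (1 - z * I) ∈ slitPlane := by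
  have hden : 1 - z * I ≠ 0 := fun h => by simpa [hz.ne'] using congrArg im h
  refine mem_slitPlane_iff.2 (Or.inr (ne_of_gt ?_))
  rw [div_im]
  simp only [add_re, sub_re, add_im, sub_im, mul_re, mul_im, I_re, I_im, one_re, one_im]
  have := normSq_pos.2 hden
  field_simp
  nlinarith

lemma one_add_sq_eq_mul (z : ℂ) : 1 + z ^ 2 = (1 + z * I) * (1 - z * I) := by
  linear_combination z ^ 2 * I_sq

lemma one_add_sq_ne_zero_of_re_pos {z : ℂ} (hz : 0 < z.re) : 1 + z ^ 2 ≠ 0 := by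
  rw [one_add_sq_eq_mul]
  refine mul_ne_zero (fun h => ?_) (fun h => ?_) <;> simpa [hz.ne'] using congrArg im h

theorem hasDerivAt_arctan {z : ℂ} (hz : (1 + z * I) / (1 - z * I) ∈ slitPlane) :
    HasDerivAt arctan (1 + z ^ 2)⁻¹ z := by
  have hden : 1 - z * I ≠ 0 := fun h => by simp [h] at hz
  have hnum : 1 + z * I ≠ 0 := fun h => by simp [h] at hz
  have hquot : HasDerivAt (fun t => (1 + t * I) / (1 - t * I))
      ((I * (1 - z * I) - (1 + z * I) * (-I)) / (1 - z * I) ^ 2) z :=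
    (((hasDerivAt_id z).mul_const I).const_add 1).div
      (((hasDerivAt_id z).mul_const I).const_sub 1) hden |>.congr_deriv (by simp)
  refine ((hquot.clog hz).const_mul (-I / 2)).congr_deriv ?_
  rw [eq_comm, one_add_sq_eq_mul]
  field_simp
  linear_combination 2 * I_sq

@[simp]
lemma arctan_zero : arctan 0 = 0 := by simp [arctan]

lemma continuousAt_arctan_zero : ContinuousAt arctan 0 :=
  (hasDerivAt_arctan (by simp)).continuousAt

theorem arctan_add_arctan_inv {z : ℂ} (hz : 0 < z.re) : arctan z + arctan z⁻¹ = π / 2 := by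
  set s : Set ℂ := {ζ | 0 < ζ.re}
  have hs : IsOpen s := isOpen_lt continuous_const continuous_re
  have hderiv : ∀ ζ ∈ s, HasDerivAt (fun ζ => arctan ζ + arctan ζ⁻¹) 0 ζ := by
    intro ζ (hζ : 0 < ζ.re)
    have hζ0 : ζ ≠ 0 := fun h => by simp [h] at hζ
    have hinv : 0 < ζ⁻¹.re := by
      rw [inv_re]; exact div_pos hζ (normSq_pos.2 hζ0)
    refine ((hasDerivAt_arctan (one_add_mul_I_div_one_sub_mul_I_mem_slitPlane hζ)).add
      ((hasDerivAt_arctan (one_add_mul_I_div_one_sub_mul_I_mem_slitPlane hinv)).comp ζ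
        (hasDerivAt_inv hζ0))).congr_deriv ?_
    have := one_add_sq_ne_zero_of_re_pos hζ
    rw [show 1 + ζ⁻¹ ^ 2 = (1 + ζ ^ 2) / ζ ^ 2 by field_simp; ring]
    field_simp
    ring
  have hconst := hs.is_const_of_deriv_eq_zero (convex_halfSpace_re_gt 0).isPreconnected
    (fun ζ hζ => (hderiv ζ hζ).differentiableAt.differentiableWithinAt)
    (fun ζ hζ => (hderiv ζ hζ).deriv) (show z ∈ s from hz) (show (1 : ℂ) ∈ s by simp [s])
  rw [hconst, inv_one, ← ofReal_one, ← ofReal_arctan, Real.arctan_one]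
  push_cast
  ring

lemma cpow_inv_two_re_pos {z : ℂ} (hz : z ∈ slitPlane) : 0 < (z ^ (2⁻¹ : ℂ)).re := by
  rw [cpow_inv_two_re, Real.sqrt_pos]
  rcases mem_slitPlane_iff.1 hz with hre | him
  · linarith [norm_nonneg z]
  · linarith [neg_abs_le z.re, abs_re_lt_norm.2 him]

end Complex

section

variable {c x : ℝ} {z w : ℂ}

lemma hasDerivAt_sqrt_div_sub (hx : x ∈ Ioo 0 c) :
    HasDerivAt (fun y => √(y / (c - y))) (c / (2 * (c - x) * √(x * (c - x)))) x := by
  obtain ⟨hx0, hxc⟩ := hx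
  have hcx : 0 < c - x := sub_pos.2 hxc
  have hquot : HasDerivAt (fun y => y / (c - y)) (c / (c - x) ^ 2) x :=
    ((hasDerivAt_id x).div ((hasDerivAt_id x).const_sub c) hcx.ne').congr_deriv (by simp)
  refine ((Real.hasDerivAt_sqrt (div_pos hx0 hcx).ne').comp x hquot).congr_deriv ?_
  rw [Real.sqrt_div' _ hcx.le, Real.sqrt_mul hx0.le]
  have hsq := Real.sq_sqrt hcx.le
  have := Real.sqrt_pos.2 hcx
  field_simp
  rw [hsq]

lemma hasDerivAt_arcsin_two_mul_sub_div (hx : x ∈ Ioo 0 c) :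
    HasDerivAt (fun y => Real.arcsin ((2 * y - c) / c)) (√(x * (c - x)))⁻¹ x := by
  obtain ⟨hx0, hxc⟩ := hx
  have hc : 0 < c := hx0.trans hxc
  have hlin : HasDerivAt (fun y => (2 * y - c) / c) (2 / c) x :=
    (((hasDerivAt_id x).const_mul 2).sub_const c).div_const c |>.congr_deriv (by simp)
  refine ((Real.hasDerivAt_arcsin ?_ ?_).comp x hlin).congr_deriv ?_
  · rw [ne_eq, div_eq_iff hc.ne']; linarith
  · rw [ne_eq, div_eq_iff hc.ne']; linarith
  · have h : 1 - ((2 * x - c) / c) ^ 2 = (2 / c) ^ 2 * (x * (c - x)) := by field_simp; ring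
    rw [h, Real.sqrt_mul (by positivity), Real.sqrt_sq (by positivity)]
    have := Real.sqrt_pos.2 (mul_pos hx0 (sub_pos.2 hxc))
    field_simp

lemma integrableOn_inv_sqrt_mul_sub :
    IntegrableOn (fun x => (√(x * (c - x)))⁻¹) (Ioc 0 c) := by
  rcases le_or_gt c 0 with hc | hc
  · simp [Ioc_eq_empty_of_le hc]
  exact intervalIntegral.integrableOn_deriv_of_nonneg
    (g := fun y => Real.arcsin ((2 * y - c) / c)) (by fun_prop)
    (fun x hx => hasDerivAt_arcsin_two_mul_sub_div hx) (fun x _ => by positivity)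

lemma one_sub_mul_mem_slitPlane (hz : 1 - c * z ∈ slitPlane) (hx : x ∈ Icc 0 c) :
    1 - x * z ∈ slitPlane := by
  rcases hx.1.eq_or_lt with rfl | hx0
  · simp
  have hc : 0 < c := hx0.trans_le hx.2
  convert starConvex_one_slitPlane.add_smul_sub_mem hz (t := x / c) (by positivity)
    ((div_le_one hc).2 hx.2) using 1
  have : (c : ℂ) ≠ 0 := ofReal_ne_zero.2 hc.ne'
  simp only [real_smul, ofReal_div]
  field_simp
  ring

lemma integrableOn_inv_one_sub_mul_mul_sqrt (hz : 1 - c * z ∈ slitPlane) :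
    IntegrableOn (fun x : ℝ => ((1 - x * z) * √(x * (c - x)))⁻¹) (Ioc 0 c) := by
  rcases le_or_gt c 0 with hc | hc
  · simp [Ioc_eq_empty_of_le hc]
  obtain ⟨x₀, hx₀, hmin⟩ := isCompact_Icc.exists_isMinOn (nonempty_Icc.2 hc.le)
    (f := fun x : ℝ => ‖1 - x * z‖) (by fun_prop)
  have hm : 0 < ‖1 - x₀ * z‖ :=
    norm_pos_iff.2 (slitPlane_ne_zero (one_sub_mul_mem_slitPlane hz hx₀))
  refine (integrableOn_inv_sqrt_mul_sub.const_mul ‖1 - x₀ * z‖⁻¹).mono' (by fun_prop) ?_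
  filter_upwards [ae_restrict_mem measurableSet_Ioc] with x hx
  rw [norm_inv, norm_mul, norm_real, Real.norm_of_nonneg (Real.sqrt_nonneg _), mul_inv]
  gcongr
  exact hmin (Ioc_subset_Icc_self hx)

lemma hasDerivAt_arctan_mul_sqrt_div_sub (hw : w ^ 2 = 1 - c * z) (hw_re : 0 < w.re)
    (hx : x ∈ Ioo 0 c) :
    HasDerivAt (fun y : ℝ => 2 / w * arctan (w * √(y / (c - y))))
      ((1 - x * z) * √(x * (c - x)))⁻¹ x := by
  obtain ⟨hx0, hxc⟩ := hx
  have hcx : 0 < c - x := sub_pos.2 hxc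
  set u := √(x / (c - x))
  have hu : 0 < u := Real.sqrt_pos.2 (div_pos hx0 hcx)
  have hζ : 0 < (w * u).re := by rw [re_mul_ofReal]; positivity
  refine (((hasDerivAt_arctan (one_add_mul_I_div_one_sub_mul_I_mem_slitPlane hζ)).comp x
    ((hasDerivAt_sqrt_div_sub ⟨hx0, hxc⟩).ofReal_comp.const_mul w)).const_mul
      (2 / w)).congr_deriv ?_
  have hw0 : w ≠ 0 := fun h => by simp [h] at hw_re
  have hu2 : (u : ℂ) ^ 2 = x / (c - x) := by
    rw [← ofReal_pow, Real.sq_sqrt (div_pos hx0 hcx).le]; push_cast; rfl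
  have hcx' : (c : ℂ) - x ≠ 0 := by exact_mod_cast hcx.ne'
  have hq : 1 + (w * u) ^ 2 = c * (1 - x * z) / (c - x) := by
    rw [mul_pow, hu2, hw]; field_simp; ring
  have hxz : 1 - (x : ℂ) * z ≠ 0 := by
    have := one_add_sq_ne_zero_of_re_pos hζ
    rw [hq] at this
    exact right_ne_zero_of_mul (div_ne_zero_iff.1 this).1
  have hs : √(x * (c - x)) = u * (c - x) := by
    rw [Real.sqrt_mul' _ hcx.le, show u = √x / √(c - x) from Real.sqrt_div' _ hcx.le]
    field_simp [(Real.sqrt_pos.2 hcx).ne']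
    rw [Real.sq_sqrt hcx.le]
  have hc : (c : ℂ) ≠ 0 := by exact_mod_cast (hx0.trans hxc).ne'
  rw [hq, hs]
  push_cast
  field_simp

lemma tendsto_arctan_mul_sqrt_div_sub_nhdsGT (hc : 0 < c) :
    Tendsto (fun y : ℝ => 2 / w * arctan (w * √(y / (c - y)))) (𝓝[>] 0) (𝓝 0) := by
  have hinner : ContinuousAt (fun y : ℝ => w * (√(y / (c - y)) : ℂ)) 0 := by
    fun_prop (disch := simp [hc.ne'])
  have hcont : ContinuousAt (fun y : ℝ => 2 / w * arctan (w * √(y / (c - y)))) 0 :=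
    continuousAt_const.mul (continuousAt_arctan_zero.comp_of_eq hinner (by simp))
  simpa using hcont.tendsto.mono_left (nhdsWithin_le_nhds (s := Ioi 0))

lemma tendsto_arctan_mul_sqrt_div_sub_nhdsLT (hc : 0 < c) (hw_re : 0 < w.re) :
    Tendsto (fun y : ℝ => 2 / w * arctan (w * √(y / (c - y)))) (𝓝[<] c) (𝓝 (π / w)) := by
  have hinner : ContinuousAt (fun y : ℝ => w⁻¹ * (√((c - y) / y) : ℂ)) c := by
    fun_prop (disch := simp [hc.ne'])
  have hcont : ContinuousAt (fun y : ℝ => 2 / w * (π / 2 - arctan (w⁻¹ * √((c - y) / y)))) c :=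
    continuousAt_const.mul (continuousAt_const.sub
      (continuousAt_arctan_zero.comp_of_eq hinner (by simp)))
  have hlim := hcont.tendsto.mono_left (nhdsWithin_le_nhds (s := Iio c))
  rw [show 2 / w * (π / 2 - arctan (w⁻¹ * √((c - c) / c))) = π / w by simp] at hlim
  refine hlim.congr' ?_
  filter_upwards [Ioo_mem_nhdsLT hc] with y ⟨hy0, hyc⟩
  have hu : 0 < √(y / (c - y)) := Real.sqrt_pos.2 (div_pos hy0 (sub_pos.2 hyc))
  have hζ : 0 < (w * √(y / (c - y))).re := by rw [re_mul_ofReal]; positivity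
  rw [← arctan_add_arctan_inv hζ, mul_inv, ← ofReal_inv, ← Real.sqrt_inv, inv_div]
  ring

theorem integral_inv_one_sub_mul_mul_sqrt (hc : 0 < c) (hz : 1 - c * z ∈ slitPlane) :
    ∫ x in Ioo 0 c, ((1 - x * z) * √(x * (c - x)))⁻¹ = π / (1 - c * z) ^ (1 / 2 : ℂ) := by
  rw [one_div]
  set w := (1 - c * z) ^ (2⁻¹ : ℂ)
  have hw : w ^ 2 = 1 - c * z := cpow_ofNat_inv_pow _ 2
  have hw_re : 0 < w.re := cpow_inv_two_re_pos hz
  rw [← integral_Ioc_eq_integral_Ioo, ← intervalIntegral.integral_of_le hc.le,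
    intervalIntegral.integral_eq_sub_of_hasDerivAt_of_tendsto hc
      (fun x hx => hasDerivAt_arctan_mul_sqrt_div_sub hw hw_re hx)
      ((intervalIntegrable_iff_integrableOn_Ioc_of_le hc.le).2
        (integrableOn_inv_one_sub_mul_mul_sqrt hz))
      (tendsto_arctan_mul_sqrt_div_sub_nhdsGT hc)
      (tendsto_arctan_mul_sqrt_div_sub_nhdsLT hc hw_re),
    sub_zero]

end

/-- The free Lévy measure representation of `z ↦ z(1-4z)^{-1/2}`, the free
cumulant transform of the BDLP of the standard free gamma distribution. -/
theorem stmt9 (z : ℂ) (hz : z.im < 0) :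
    z / (1 - 4 * z) ^ ((1 : ℂ) / 2)
      = (1 / 2 : ℂ) * ∫ x in Set.Ioo (0 : ℝ) 4,
          (1 / (1 - (x : ℂ) * z) - 1) *
            ((2 / (Real.pi * x * Real.sqrt (x * (4 - x))) : ℝ) : ℂ) := by
  have hslit : 1 - ((4 : ℝ) : ℂ) * z ∈ slitPlane :=
    mem_slitPlane_iff.2 (Or.inr (by simpa using hz.ne))
  have hintegrand : EqOn (fun x : ℝ => (1 / (1 - (x : ℂ) * z) - 1) *
      ((2 / (π * x * √(x * (4 - x))) : ℝ) : ℂ))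
      (fun x : ℝ => 2 * z / π * ((1 - x * z) * √(x * (4 - x)))⁻¹) (Ioo 0 4) := by
    intro x hx
    have hxz := slitPlane_ne_zero (one_sub_mul_mem_slitPlane hslit (Ioo_subset_Icc_self hx))
    have hx0 : (x : ℂ) ≠ 0 := ofReal_ne_zero.2 hx.1.ne'
    have hπ : (π : ℂ) ≠ 0 := ofReal_ne_zero.2 Real.pi_ne_zero
    push_cast
    field_simp
    ring
  rw [setIntegral_congr_fun measurableSet_Ioo hintegrand, integral_const_mul,
    integral_inv_one_sub_mul_mul_sqrt (by norm_num) hslit]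
  push_cast
  field_simp
end

section
/- For every p ∈ (0,1) and every z ∈ ℂ with Im(z) ≠ 0 (or z real < 0), one has 1 - (1 - z)^p = ∫_0^1 (1/(1 - xz) - 1) · (sin(pπ)/(π x)) · ((1 - x)/x)^p dx, with principal branch powers. -/
/-! With `w(x) = x^{-p} (1-x)^p` the integrand is `(sin pπ / π) · z / (1 - xz) · w(x)`, so the
right-hand side is `(sin pπ / π) · G(z)` with `G(z) = ∫₀¹ z / (1 - xz) w(x) dx`, holomorphic on
`Ω = {z | 1 - z ∈ slitPlane} = ℂ ∖ [1, ∞)`. Differentiating under the integral sign and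
integrating by parts gives `(1 - z) G'(z) = K - p G(z)`, where `K = ∫₀¹ w = B(1-p, 1+p) = pπ / sin pπ`.
Hence `(K - p G(z)) (1 - z)^{-p}` has zero derivative on the star-shaped domain `Ω` and equals its
value `K` at `0`, i.e. `p G(z) = K (1 - (1 - z)^p)`. -/

open MeasureTheory Set Filter Topology Complex
open scoped Real

section

variable {p : ℝ} {z : ℂ}

theorem one_sub_ofReal_mul_mem_slitPlane (hz : 1 - z ∈ slitPlane) {t : ℝ}
    (ht : t ∈ Icc (0 : ℝ) 1) : 1 - t * z ∈ slitPlane := by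
  simpa [sub_eq_add_neg, Complex.real_smul] using
    starConvex_one_slitPlane.add_smul_mem (y := -z) (by simpa [sub_eq_add_neg] using hz) ht.1 ht.2

theorem one_sub_ofReal_mul_ne_zero (hz : 1 - z ∈ slitPlane) {t : ℝ}
    (ht : t ∈ Icc (0 : ℝ) 1) : 1 - t * z ≠ 0 :=
  slitPlane_ne_zero (one_sub_ofReal_mul_mem_slitPlane hz ht)

theorem continuousOn_div_one_sub_ofReal_mul (hz : 1 - z ∈ slitPlane) (a : ℂ) :
    ContinuousOn (fun x : ℝ => a / (1 - x * z)) (Icc 0 1) :=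
  continuousOn_const.div (by fun_prop) fun _ hx => one_sub_ofReal_mul_ne_zero hz hx

theorem continuousOn_div_one_sub_ofReal_mul_sq (hz : 1 - z ∈ slitPlane) (a : ℂ) :
    ContinuousOn (fun x : ℝ => a / (1 - x * z) ^ 2) (Icc 0 1) :=
  continuousOn_const.div (by fun_prop) fun _ hx => pow_ne_zero 2 (one_sub_ofReal_mul_ne_zero hz hx)

theorem isOpen_setOf_one_sub_mem_slitPlane : IsOpen {z : ℂ | 1 - z ∈ slitPlane} :=
  isOpen_slitPlane.preimage (by fun_prop)

theorem isPreconnected_setOf_one_sub_mem_slitPlane :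
    IsPreconnected {z : ℂ | 1 - z ∈ slitPlane} := by
  have hstar : StarConvex ℝ 0 {z : ℂ | 1 - z ∈ slitPlane} := by
    intro z hz a b _ hb hab
    simpa [Complex.real_smul] using one_sub_ofReal_mul_mem_slitPlane hz ⟨hb, by linarith⟩
  exact (hstar.isPathConnected (by simp)).isConnected.isPreconnected

theorem exists_pos_eventually_le_norm_one_sub_mul (hz : 1 - z ∈ slitPlane) :
    ∃ c > 0, ∀ᶠ w : ℂ in 𝓝 z, ∀ x ∈ Icc (0 : ℝ) 1, c ≤ ‖1 - x * w‖ := by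
  obtain ⟨x₀, hx₀, hmin⟩ := isCompact_Icc.exists_isMinOn (nonempty_Icc.2 zero_le_one)
    (f := fun x : ℝ => ‖1 - x * z‖) (by fun_prop)
  set c := ‖1 - x₀ * z‖
  have hc : 0 < c := norm_pos_iff.2 (one_sub_ofReal_mul_ne_zero hz hx₀)
  refine ⟨c / 2, half_pos hc, ?_⟩
  filter_upwards [Metric.ball_mem_nhds z (half_pos hc)] with w hw x hx
  rw [Metric.mem_ball, dist_eq_norm] at hw
  have hxw : ‖(x : ℂ) * (w - z)‖ ≤ c / 2 := by
    rw [norm_mul, Complex.norm_real, Real.norm_of_nonneg hx.1]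
    nlinarith [hx.2, norm_nonneg (w - z)]
  calc c / 2 ≤ ‖1 - x * z‖ - ‖(x : ℂ) * (w - z)‖ := by linarith [show c ≤ ‖1 - x * z‖ from hmin hx]
    _ ≤ ‖1 - x * w‖ := by
        have := norm_sub_norm_le (1 - x * z) ((x : ℂ) * (w - z))
        rwa [show 1 - x * z - x * (w - z) = 1 - x * w by ring] at this

theorem hasDerivAt_div_one_sub_mul {x w : ℂ} (h : 1 - x * w ≠ 0) :
    HasDerivAt (fun w => w / (1 - x * w)) (1 / (1 - x * w) ^ 2) w := by
  refine ((hasDerivAt_id w).div (((hasDerivAt_id w).const_mul x).const_sub 1) h).congr_deriv ?_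
  simp only [id]
  ring

noncomputable def betaWeight (p x : ℝ) : ℝ := x ^ (-p) * (1 - x) ^ p

theorem betaWeight_nonneg {x : ℝ} (hx : x ∈ Icc (0 : ℝ) 1) : 0 ≤ betaWeight p x :=
  mul_nonneg (Real.rpow_nonneg hx.1 _) (Real.rpow_nonneg (sub_nonneg.2 hx.2) _)

theorem integrableOn_betaWeight (hp0 : 0 ≤ p) (hp1 : p < 1) :
    IntegrableOn (betaWeight p) (Ioo 0 1) := by
  have h : IntegrableOn (fun x : ℝ => x ^ (-p)) (Ioo 0 1) :=
    (intervalIntegrable_iff_integrableOn_Ioo_of_le zero_le_one).1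
      (intervalIntegral.intervalIntegrable_rpow' (by linarith))
  exact h.mul_continuousOn_of_subset
    ((continuousOn_const.sub continuousOn_id).rpow_const fun _ _ => Or.inr hp0)
    measurableSet_Ioo isCompact_Icc Ioo_subset_Icc_self

theorem integrableOn_mul_betaWeight (hp0 : 0 ≤ p) (hp1 : p < 1) {g : ℝ → ℂ}
    (hg : ContinuousOn g (Icc 0 1)) :
    IntegrableOn (fun x => g x * betaWeight p x) (Ioo 0 1) :=
  IntegrableOn.continuousOn_mul_of_subset hg (integrableOn_betaWeight hp0 hp1).ofReal
    isCompact_Icc measurableSet_Ioo Ioo_subset_Icc_self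

theorem integral_betaWeight (hp : p ∈ Ioo (0 : ℝ) 1) :
    ∫ x in Ioo (0 : ℝ) 1, betaWeight p x = p * π / Real.sin (p * π) := by
  have hbeta : ∫ x in Ioo (0 : ℝ) 1, (betaWeight p x : ℂ) = betaIntegral (1 - p) (1 + p) := by
    rw [← integral_Ioc_eq_integral_Ioo, ← intervalIntegral.integral_of_le zero_le_one,
      betaIntegral]
    refine intervalIntegral.integral_congr fun x hx => ?_
    rw [uIcc_of_le zero_le_one] at hx
    simp only [betaWeight, ofReal_mul, ofReal_cpow hx.1, ofReal_cpow (sub_nonneg.2 hx.2)]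
    push_cast
    ring_nf
  rw [betaIntegral_eq_Gamma_mul_div _ _ (by simp [hp.2]) (by simp; linarith [hp.1])] at hbeta
  apply ofReal_injective
  have hcast : Gamma (1 - p) * Gamma (1 + p) / Gamma (1 - p + (1 + p))
      = ((Real.Gamma (1 - p) * Real.Gamma (p + 1) / Real.Gamma 2 : ℝ) : ℂ) := by
    rw [show (1 : ℂ) - p + (1 + p) = ((2 : ℝ) : ℂ) by push_cast; ring, add_comm (1 : ℂ)]
    push_cast [← Gamma_ofReal]
    rfl
  rw [← integral_complex_ofReal, hbeta, hcast, ofReal_inj, Real.Gamma_two, div_one,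
    Real.Gamma_add_one hp.1.ne', mul_left_comm, mul_comm (Real.Gamma (1 - p)),
    Real.Gamma_mul_Gamma_one_sub, mul_comm π p]
  ring

theorem rpow_one_sub_mul_one_sub_rpow_one_add {x : ℝ} (hx : x ∈ Ioo (0 : ℝ) 1) :
    x ^ (1 - p) * (1 - x) ^ (1 + p) = x * (1 - x) * betaWeight p x := by
  rw [betaWeight, sub_eq_add_neg, Real.rpow_add hx.1, Real.rpow_add (sub_pos.2 hx.2),
    Real.rpow_one, Real.rpow_one]
  ring

theorem hasDerivAt_rpow_one_sub_mul_one_sub_rpow_one_add {x : ℝ} (hx : x ∈ Ioo (0 : ℝ) 1) :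
    HasDerivAt (fun y : ℝ => y ^ (1 - p) * (1 - y) ^ (1 + p))
      ((1 - p - 2 * x) * betaWeight p x) x := by
  have h1x : 0 < 1 - x := sub_pos.2 hx.2
  have ha := (hasDerivAt_id x).rpow_const (p := 1 - p) (Or.inl hx.1.ne')
  have hb := ((hasDerivAt_id x).const_sub 1).rpow_const (p := 1 + p) (Or.inl h1x.ne')
  refine (ha.mul hb).congr_deriv ?_
  have e₁ : x ^ (1 - p) = x * x ^ (-p) := by
    rw [sub_eq_add_neg, Real.rpow_add hx.1, Real.rpow_one]
  have e₂ : (1 - x) ^ (1 + p) = (1 - x) * (1 - x) ^ p := by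
    rw [Real.rpow_add h1x, Real.rpow_one]
  simp only [id, betaWeight, add_sub_cancel_left, sub_sub_cancel_left, e₁, e₂]
  ring

/-- The integrand is the derivative of `-z x^{1-p} (1-x)^{1+p} / (1 - xz)`, which vanishes at
both endpoints. -/
theorem integral_kernel_mul_betaWeight_eq_zero (hp0 : 0 ≤ p) (hp1 : p < 1)
    (hz : 1 - z ∈ slitPlane) :
    ∫ x in Ioo (0 : ℝ) 1,
      ((1 - z) / (1 - x * z) ^ 2 + p * z / (1 - x * z) - 1) * betaWeight p x = 0 := by
  have hne : ∀ x ∈ Icc (0 : ℝ) 1, 1 - x * z ≠ 0 := fun x hx => one_sub_ofReal_mul_ne_zero hz hx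
  set φ : ℝ → ℂ := fun x => -z * (x ^ (1 - p) * (1 - x) ^ (1 + p) : ℝ) / (1 - x * z)
  have hφ_cont : ContinuousOn φ (Icc 0 1) := by
    refine ContinuousOn.div (continuousOn_const.mul (continuous_ofReal.comp_continuousOn ?_))
      (by fun_prop) hne
    exact (continuousOn_id.rpow_const fun _ _ => Or.inr (by linarith)).mul
      ((continuousOn_const.sub continuousOn_id).rpow_const fun _ _ => Or.inr (by linarith))
  have hφ_deriv : ∀ x ∈ Ioo (0 : ℝ) 1, HasDerivAt φ
      (((1 - z) / (1 - x * z) ^ 2 + p * z / (1 - x * z) - 1) * betaWeight p x) x := by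
    intro x hx
    have h := hne x (Ioo_subset_Icc_self hx)
    refine ((((hasDerivAt_rpow_one_sub_mul_one_sub_rpow_one_add hx).ofReal_comp).const_mul
      (-z)).div (((hasDerivAt_id x).ofReal_comp.mul_const z).const_sub 1) h).congr_deriv ?_
    simp only [id, rpow_one_sub_mul_one_sub_rpow_one_add hx]
    have h' : 1 - z * x ≠ 0 := by rwa [mul_comm]
    push_cast
    field_simp
    ring
  have hint : IntervalIntegrable
      (fun x : ℝ => ((1 - z) / (1 - x * z) ^ 2 + p * z / (1 - x * z) - 1) * betaWeight p x)
      volume 0 1 := by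
    refine (intervalIntegrable_iff_integrableOn_Ioo_of_le zero_le_one).2
      (integrableOn_mul_betaWeight hp0 hp1 ?_)
    exact ((continuousOn_div_one_sub_ofReal_mul_sq hz _).add
      (continuousOn_div_one_sub_ofReal_mul hz _)).sub continuousOn_const
  rw [← integral_Ioc_eq_integral_Ioo, ← intervalIntegral.integral_of_le zero_le_one,
    intervalIntegral.integral_eq_sub_of_hasDerivAt_of_le zero_le_one hφ_cont hφ_deriv hint]
  simp [φ, Real.zero_rpow (by linarith : 1 - p ≠ 0), Real.zero_rpow (by linarith : 1 + p ≠ 0)]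

noncomputable def betaTransform (p : ℝ) (z : ℂ) : ℂ :=
  ∫ x in Ioo (0 : ℝ) 1, z / (1 - x * z) * betaWeight p x

theorem betaTransform_zero : betaTransform p 0 = 0 := by
  simp [betaTransform]

theorem hasDerivAt_betaTransform (hp0 : 0 ≤ p) (hp1 : p < 1) (hz : 1 - z ∈ slitPlane) :
    HasDerivAt (betaTransform p)
      (∫ x in Ioo (0 : ℝ) 1, 1 / (1 - x * z) ^ 2 * betaWeight p x) z := by
  obtain ⟨c, hc, hcz⟩ := exists_pos_eventually_le_norm_one_sub_mul hz
  obtain ⟨s, hs, hsc⟩ := hcz.exists_mem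
  have hΩ : ∀ᶠ w in 𝓝 z, 1 - w ∈ slitPlane := isOpen_setOf_one_sub_mem_slitPlane.mem_nhds hz
  refine (hasDerivAt_integral_of_dominated_loc_of_deriv_le
    (μ := volume.restrict (Ioo 0 1))
    (F := fun (w : ℂ) (x : ℝ) => w / (1 - x * w) * betaWeight p x)
    (F' := fun (w : ℂ) (x : ℝ) => 1 / (1 - x * w) ^ 2 * betaWeight p x)
    (bound := fun x => betaWeight p x / c ^ 2) hs ?_ ?_ ?_ ?_ ?_ ?_).2
  · filter_upwards [hΩ] with w hw
    exact (integrableOn_mul_betaWeight hp0 hp1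
      (continuousOn_div_one_sub_ofReal_mul hw w)).aestronglyMeasurable
  · exact integrableOn_mul_betaWeight hp0 hp1 (continuousOn_div_one_sub_ofReal_mul hz z)
  · exact (integrableOn_mul_betaWeight hp0 hp1
      (continuousOn_div_one_sub_ofReal_mul_sq hz 1)).aestronglyMeasurable
  · refine (ae_restrict_iff' measurableSet_Ioo).2 (Eventually.of_forall fun x hx w hw => ?_)
    have hxI := Ioo_subset_Icc_self hx
    have hw0 := betaWeight_nonneg (p := p) hxI
    rw [norm_mul, norm_div, norm_one, norm_pow, norm_real, Real.norm_of_nonneg hw0,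
      one_div_mul_eq_div]
    exact div_le_div_of_nonneg_left hw0 (pow_pos hc 2) (pow_le_pow_left₀ hc.le (hsc w hw x hxI) 2)
  · exact (integrableOn_betaWeight hp0 hp1).div_const _
  · refine (ae_restrict_iff' measurableSet_Ioo).2 (Eventually.of_forall fun x hx w hw => ?_)
    have h : 1 - x * w ≠ 0 := norm_pos_iff.1 (hc.trans_le (hsc w hw x (Ioo_subset_Icc_self hx)))
    exact (hasDerivAt_div_one_sub_mul h).mul_const _

theorem one_sub_mul_deriv_betaTransform (hp0 : 0 ≤ p) (hp1 : p < 1) (hz : 1 - z ∈ slitPlane) :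
    (1 - z) * ∫ x in Ioo (0 : ℝ) 1, 1 / (1 - x * z) ^ 2 * betaWeight p x
      = (∫ x in Ioo (0 : ℝ) 1, betaWeight p x) - p * betaTransform p z := by
  have h₂ := integrableOn_mul_betaWeight hp0 hp1 (continuousOn_div_one_sub_ofReal_mul_sq hz 1)
  have h₁ := integrableOn_mul_betaWeight hp0 hp1 (continuousOn_div_one_sub_ofReal_mul hz z)
  have h₀ := (integrableOn_betaWeight hp0 hp1).ofReal (𝕜 := ℂ)
  have key := integral_kernel_mul_betaWeight_eq_zero hp0 hp1 hz
  have e : ∀ x : ℝ, ((1 - z) / (1 - x * z) ^ 2 + p * z / (1 - x * z) - 1) * betaWeight p x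
      = (1 - z) * (1 / (1 - x * z) ^ 2 * betaWeight p x)
        + p * (z / (1 - x * z) * betaWeight p x) - betaWeight p x := fun x => by ring
  simp_rw [e] at key
  rw [integral_sub, integral_add, integral_const_mul, integral_const_mul,
    integral_complex_ofReal] at key
  · rw [betaTransform]
    linear_combination key
  all_goals first
    | exact h₂.const_mul _ | exact h₁.const_mul _ | exact h₀
    | exact (h₂.const_mul _).add (h₁.const_mul _)

/-- By `one_sub_mul_deriv_betaTransform`, `(K - p G(w)) (1 - w)^{-p}` has zero derivative, so it is
constant on the star-shaped domain `{w | 1 - w ∈ slitPlane}`. -/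
theorem mul_betaTransform_eq (hp0 : 0 ≤ p) (hp1 : p < 1) (hz : 1 - z ∈ slitPlane) :
    p * betaTransform p z
      = (∫ x in Ioo (0 : ℝ) 1, betaWeight p x : ℝ) * (1 - (1 - z) ^ (p : ℂ)) := by
  set K : ℂ := ((∫ x in Ioo (0 : ℝ) 1, betaWeight p x : ℝ) : ℂ)
  set h : ℂ → ℂ := fun w => (K - p * betaTransform p w) * (1 - w) ^ (-(p : ℂ))
  have hderiv : ∀ w ∈ {w : ℂ | 1 - w ∈ slitPlane}, HasDerivAt h 0 w := fun w hw => by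
    have hq := ((hasDerivAt_id w).const_sub 1).cpow_const (c := -(p : ℂ)) hw
    refine ((((hasDerivAt_betaTransform hp0 hp1 hw).const_mul (p : ℂ)).const_sub K).mul
      hq).congr_deriv ?_
    have hsplit : (1 - w) ^ (-(p : ℂ)) = (1 - w) ^ (-(p : ℂ) - 1) * (1 - w) := by
      simpa using cpow_add (-(p : ℂ) - 1) 1 (slitPlane_ne_zero hw)
    simp only [id]
    rw [hsplit]
    linear_combination (-p * (1 - w) ^ (-(p : ℂ) - 1)) *
      one_sub_mul_deriv_betaTransform hp0 hp1 hw
  have hconst := isOpen_setOf_one_sub_mem_slitPlane.is_const_of_deriv_eq_zero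
    isPreconnected_setOf_one_sub_mem_slitPlane
    (fun w hw => (hderiv w hw).differentiableAt.differentiableWithinAt)
    (fun w hw => (hderiv w hw).deriv) hz (show (0 : ℂ) ∈ {w : ℂ | 1 - w ∈ slitPlane} by simp)
  have hpow : (1 - z) ^ (p : ℂ) ≠ 0 := by simp [cpow_eq_zero_iff, slitPlane_ne_zero hz]
  simp only [h, betaTransform_zero, mul_zero, sub_zero, one_cpow, cpow_neg] at hconst
  field_simp at hconst
  linear_combination -hconst

theorem sin_div_pi_mul_betaTransform (hp : p ∈ Ioo (0 : ℝ) 1) (hz : 1 - z ∈ slitPlane) :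
    ((Real.sin (p * π) / π : ℝ) : ℂ) * betaTransform p z = 1 - (1 - z) ^ (p : ℂ) := by
  have hsin : Real.sin (p * π) ≠ 0 :=
    (Real.sin_pos_of_pos_of_lt_pi (by nlinarith [hp.1, Real.pi_pos])
      (by nlinarith [hp.2, Real.pi_pos])).ne'
  have h := mul_betaTransform_eq hp.1.le hp.2 hz
  rw [integral_betaWeight hp] at h
  set s := Real.sin (p * π)
  have hpc : (p : ℂ) ≠ 0 := ofReal_ne_zero.2 hp.1.ne'
  have hs : (s : ℂ) ≠ 0 := ofReal_ne_zero.2 hsin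
  have hpi : (π : ℂ) ≠ 0 := ofReal_ne_zero.2 Real.pi_ne_zero
  push_cast at h ⊢
  field_simp at h ⊢
  linear_combination h

end

/-- The free Lévy–Khintchine representation of `1 - (1-z)^p`. -/
theorem stmt10 (p : ℝ) (hp : p ∈ Set.Ioo (0 : ℝ) 1) (z : ℂ) (hz : z.im ≠ 0) :
    1 - (1 - z) ^ (p : ℂ)
      = ∫ x in Set.Ioo (0 : ℝ) 1,
          (1 / (1 - (x : ℂ) * z) - 1) *
            ((Real.sin (p * Real.pi) / (Real.pi * x) * ((1 - x) / x) ^ p : ℝ) : ℂ) := by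
  have hz' : 1 - z ∈ slitPlane := mem_slitPlane_iff.2 (Or.inr (by simpa using hz))
  rw [← sin_div_pi_mul_betaTransform hp hz', betaTransform, ← integral_const_mul]
  refine setIntegral_congr_fun measurableSet_Ioo fun x hx => ?_
  have hne : 1 - z * x ≠ 0 := by
    rw [mul_comm]; exact one_sub_ofReal_mul_ne_zero hz' (Ioo_subset_Icc_self hx)
  have hx0 : (x : ℂ) ≠ 0 := ofReal_ne_zero.2 hx.1.ne'
  have hxp : ((x ^ p : ℝ) : ℂ) ≠ 0 := ofReal_ne_zero.2 (Real.rpow_pos_of_pos hx.1 p).ne'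
  have hpi : (π : ℂ) ≠ 0 := ofReal_ne_zero.2 Real.pi_ne_zero
  simp only [betaWeight, Real.div_rpow (sub_pos.2 hx.2).le hx.1.le, Real.rpow_neg hx.1.le]
  set s := Real.sin (p * π)
  push_cast
  field_simp
  ring
end

section
/- Let f : ℂ⁻ → ℂ be analytic on the open lower half-plane and extend continuously to 0 with f(0) = 0, and suppose f is analytic in a neighborhood of each ray {wz : 0 < w ≤ 1} for z ∈ ℂ⁻, with ∫_0^1 |f(wz)|/w dw < ∞ locally uniformly in z. Define F(z) = ∫_0^1 f(wz) (dw/w). Then F is differentiable on ℂ⁻ and z F′(z) = f(z) for all z ∈ ℂ⁻. -/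
/-!
With `φ w = f (w z)` one has `φ' w = z f'(w z)`, and `φ` is continuous at `0` because `f` is, so the
fundamental theorem of calculus on `[0, 1]` gives `z ∫₀¹ f'(w z) dw = f z - f 0 = f z`. The left side
is `z F'(z)` once `F` is differentiated under the integral sign, the `z`-derivative of `f (w z) / w`
being `f'(w z)`. Cauchy's estimate on a circle of radius `r`, applied to `y ↦ f (w y)`, bounds
`‖f'(w x)‖` by `sup ‖f (w y)‖ / (w r) ≤ g w / r`, so the domination of `‖f (w y)‖ / w` passes to the
derivatives.
-/

open MeasureTheory Metric Set Filter Topology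

section Dilation

variable {f : ℂ → ℂ} {U : Set ℂ}

theorem norm_mul_deriv_comp_mul_le (hf : DifferentiableOn ℂ f U) {c x : ℂ} {r M : ℝ}
    (hr : 0 < r) (hxr : closedBall x r ⊆ (c * ·) ⁻¹' U)
    (hM : ∀ y ∈ sphere x r, ‖f (c * y)‖ ≤ M) : ‖c‖ * ‖deriv f (c * x)‖ ≤ M / r := by
  have hdiff : DiffContOnCl ℂ (f <| c * ·) (ball x r) := by
    refine DifferentiableOn.diffContOnCl ?_
    rw [closure_ball x hr.ne']
    exact hf.comp (differentiable_id.const_mul c).differentiableOn hxr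
  simpa [deriv_comp_mul_left] using Complex.norm_deriv_le_of_forall_mem_sphere_norm_le hr hdiff hM

theorem norm_deriv_comp_ofReal_mul_le (hf : DifferentiableOn ℂ f U) {x : ℂ} {r w M : ℝ}
    (hr : 0 < r) (hw : 0 < w) (hxr : closedBall x r ⊆ ((w : ℂ) * ·) ⁻¹' U)
    (hM : ∀ y ∈ sphere x r, ‖f (w * y)‖ / w ≤ M) : ‖deriv f (w * x)‖ ≤ M / r := by
  have hwM : ∀ y ∈ sphere x r, ‖f (w * y)‖ ≤ w * M := fun y hy =>
    (div_le_iff₀' hw).mp (hM y hy)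
  have h := norm_mul_deriv_comp_mul_le hf hr hxr hwM
  rw [Complex.norm_real, Real.norm_of_nonneg hw.le, mul_div_assoc] at h
  exact le_of_mul_le_mul_left h hw

theorem hasDerivAt_comp_ofReal_mul_div (hU : IsOpen U) (hf : DifferentiableOn ℂ f U)
    {w : ℝ} (hw : w ≠ 0) {x : ℂ} (hx : (w : ℂ) * x ∈ U) :
    HasDerivAt (fun y => f (w * y) / w) (deriv f (w * x)) x := by
  have hwC : (w : ℂ) ≠ 0 := Complex.ofReal_ne_zero.mpr hw
  have h := (((hf.differentiableAt (hU.mem_nhds hx)).hasDerivAt).comp x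
    ((hasDerivAt_id x).const_mul (w : ℂ))).div_const (w : ℂ)
  simpa [mul_div_cancel_right₀ _ hwC] using h

theorem ContinuousOn.comp_ofReal_mul {φ : ℂ → ℂ} (hφ : ContinuousOn φ U)
    (hdil : ∀ w ∈ Ioo (0 : ℝ) 1, ∀ z ∈ U, (w : ℂ) * z ∈ U) {z : ℂ} (hz : z ∈ U) :
    ContinuousOn (fun w : ℝ => φ (w * z)) (Ioo 0 1) :=
  hφ.comp (Complex.continuous_ofReal.mul continuous_const).continuousOn
    fun w hw => hdil w hw z hz


theorem hasDerivAt_integral_comp_ofReal_mul_div (hU : IsOpen U)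
    (hdil : ∀ w ∈ Ioo (0 : ℝ) 1, ∀ z ∈ U, (w : ℂ) * z ∈ U) (hf : DifferentiableOn ℂ f U)
    (hdom : ∀ K : Set ℂ, IsCompact K → K ⊆ U → ∃ g : ℝ → ℝ, IntegrableOn g (Ioo (0 : ℝ) 1) ∧
      ∀ z ∈ K, ∀ w ∈ Ioo (0 : ℝ) 1, ‖f ((w : ℂ) * z)‖ / w ≤ g w)
    {z : ℂ} (hz : z ∈ U) :
    IntegrableOn (fun w : ℝ => deriv f (w * z)) (Ioo 0 1) ∧
      HasDerivAt (fun x => ∫ w in Ioo (0 : ℝ) 1, f (w * x) / w)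
        (∫ w in Ioo (0 : ℝ) 1, deriv f (w * z)) z := by
  obtain ⟨ε, hε, hεU⟩ := Metric.isOpen_iff.mp hU z hz
  set r := ε / 4 with hr_def
  have hr : 0 < r := by positivity
  have hK : closedBall z (2 * r) ⊆ U := (closedBall_subset_ball (by linarith)).trans hεU
  obtain ⟨g, hg, hfg⟩ := hdom _ (isCompact_closedBall z (2 * r)) hK
  have hball : ball z r ⊆ U := ball_subset_closedBall.trans
    ((closedBall_subset_closedBall (by linarith)).trans hK)
  have hmeas : ∀ x ∈ U, AEStronglyMeasurable (fun w : ℝ => f (w * x) / w)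
      (volume.restrict (Ioo 0 1)) := fun x hx =>
    ((hf.continuousOn.comp_ofReal_mul hdil hx).div Complex.continuous_ofReal.continuousOn
      fun w hw => Complex.ofReal_ne_zero.mpr hw.1.ne').aestronglyMeasurable measurableSet_Ioo
  have hint : Integrable (fun w : ℝ => f (w * z) / w) (volume.restrict (Ioo 0 1)) := by
    refine hg.mono' (hmeas z hz) ((ae_restrict_iff' measurableSet_Ioo).2 (.of_forall ?_))
    intro w hw
    rw [norm_div, Complex.norm_real, Real.norm_of_nonneg hw.1.le]
    exact hfg z (mem_closedBall_self (by positivity)) w hw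
  have hmeas' : AEStronglyMeasurable (fun w : ℝ => deriv f (w * z)) (volume.restrict (Ioo 0 1)) :=
    (((hf.analyticOnNhd hU).deriv.continuousOn).comp_ofReal_mul hdil hz).aestronglyMeasurable
      measurableSet_Ioo
  have hbound : ∀ w ∈ Ioo (0 : ℝ) 1, ∀ x ∈ ball z r, ‖deriv f (w * x)‖ ≤ g w / r := by
    intro w hw x hx
    have hxr : closedBall x r ⊆ closedBall z (2 * r) := closedBall_subset_closedBall' (by
      rw [mem_ball] at hx; linarith)
    exact norm_deriv_comp_ofReal_mul_le hf hr hw.1 (fun y hy => hdil w hw y (hK (hxr hy)))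
      fun y hy => hfg y (hxr (sphere_subset_closedBall hy)) w hw
  exact hasDerivAt_integral_of_dominated_loc_of_deriv_le (ball_mem_nhds z hr)
    (eventually_of_mem (ball_mem_nhds z hr) fun x hx => hmeas x (hball hx)) hint hmeas'
    ((ae_restrict_iff' measurableSet_Ioo).2 (.of_forall hbound)) (hg.div_const r)
    ((ae_restrict_iff' measurableSet_Ioo).2 (.of_forall fun w hw x hx =>
      hasDerivAt_comp_ofReal_mul_div hU hf hw.1.ne' (hdil w hw x (hball hx))))


theorem mul_integral_deriv_comp_ofReal_mul (hU : IsOpen U)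
    (hdil : ∀ w ∈ Ioo (0 : ℝ) 1, ∀ z ∈ U, (w : ℂ) * z ∈ U) (hf : DifferentiableOn ℂ f U)
    (hf0 : ContinuousWithinAt f U 0) {z : ℂ} (hz : z ∈ U)
    (hint : IntegrableOn (fun w : ℝ => deriv f (w * z)) (Ioo 0 1)) :
    z * ∫ w in Ioo (0 : ℝ) 1, deriv f (w * z) = f z - f 0 := by
  have hcont : ContinuousOn f (insert 0 U) := by
    rintro u (rfl | hu)
    · exact continuousWithinAt_insert_self.mpr hf0
    · exact (hf.continuousOn.continuousAt (hU.mem_nhds hu)).continuousWithinAt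
  have hmaps : MapsTo (fun w : ℝ => (w : ℂ) * z) (Icc 0 1) (insert 0 U) := by
    intro w hw
    rcases eq_or_lt_of_le hw.1 with rfl | hw0
    · simp
    rcases eq_or_lt_of_le hw.2 with rfl | hw1
    · simpa using Or.inr hz
    · exact Or.inr (hdil w ⟨hw0, hw1⟩ z hz)
  have hderiv : ∀ w ∈ Ioo (0 : ℝ) 1,
      HasDerivAt (fun w : ℝ => f (w * z)) (z * deriv f (w * z)) w := by
    intro w hw
    have h := ((hf.differentiableAt (hU.mem_nhds (hdil w hw z hz))).hasDerivAt).comp (w : ℂ)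
      ((hasDerivAt_id (w : ℂ)).mul_const z)
    simpa [mul_comm z] using h.comp_ofReal
  rw [← integral_const_mul, ← integral_Ioc_eq_integral_Ioo,
    ← intervalIntegral.integral_of_le zero_le_one,
    intervalIntegral.integral_eq_sub_of_hasDerivAt_of_le zero_le_one
      (hcont.comp (Complex.continuous_ofReal.mul continuous_const).continuousOn hmaps) hderiv
      ((intervalIntegrable_iff_integrableOn_Ioo_of_le zero_le_one).2 (hint.const_mul z))]
  simp

end Dilation

/-- Analytic core: if `F(z) = ∫_0^1 f(wz) dw/w` with `f` analytic on the lower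
half-plane, `f(0) = 0`, and a local uniform domination, then `z F'(z) = f(z)`. -/
theorem stmt12 (f : ℂ → ℂ)
    (hf : DifferentiableOn ℂ f {z : ℂ | z.im < 0})
    (hf0 : f 0 = 0)
    (hcont : ContinuousWithinAt f {z : ℂ | z.im < 0} 0)
    (hdom : ∀ K : Set ℂ, IsCompact K → K ⊆ {z : ℂ | z.im < 0} →
      ∃ g : ℝ → ℝ, IntegrableOn g (Set.Ioo (0 : ℝ) 1) ∧
        ∀ z ∈ K, ∀ w ∈ Set.Ioo (0 : ℝ) 1, ‖f ((w : ℂ) * z)‖ / w ≤ g w)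
    (F : ℂ → ℂ)
    (hF : ∀ z, F z = ∫ w in Set.Ioo (0 : ℝ) 1, f ((w : ℂ) * z) / (w : ℂ)) :
    ∀ z : ℂ, z.im < 0 → ∃ F' : ℂ, HasDerivAt F F' z ∧ z * F' = f z := by
  intro z hz
  have hU : IsOpen {z : ℂ | z.im < 0} := isOpen_lt Complex.continuous_im continuous_const
  have hdil : ∀ w ∈ Ioo (0 : ℝ) 1, ∀ z ∈ {z : ℂ | z.im < 0}, (w : ℂ) * z ∈ {z : ℂ | z.im < 0} :=
    fun w hw z hz => by simpa using mul_neg_of_pos_of_neg hw.1 hz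
  obtain ⟨hint, hderiv⟩ := hasDerivAt_integral_comp_ofReal_mul_div hU hdil hf hdom hz
  refine ⟨_, funext hF ▸ hderiv, ?_⟩
  rw [mul_integral_deriv_comp_ofReal_mul hU hdil hf hcont hz hint, hf0, sub_zero]
end

section
/- Let ν be a nonnegative Borel measure on ℝ with ν({0}) = 0, ∫(x² ∧ 1) ν(dx) < ∞, and ∫_{{|x|>1}} log(1+|x|) ν(dx) < ∞. Let a ≥ 0, η ∈ ℝ and define C(z) = ηz + az² + ∫_ℝ (1/(1-xz) - 1 - xz 1_{[-1,1]}(x)) ν(dx) for z ∈ ℂ⁻. Then for every z ∈ ℂ⁻, the integral ∫_0^∞ |C(e^{-t} z)| dt is finite. -/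
/-!
For `Im z ≠ 0` and real `r` one has `|1 - r z| ≥ |Im z| / |z|`, so the integrand of `C` at
`e^{-s} z` is bounded, up to a constant depending on `z`, by `(e^{-s} x)²` when `|x| ≤ 1` and by
`min (e^{-s} |x|) 1` when `|x| > 1`. Integrating in `s` first (Tonelli), these give at most `x²`
and `log |x| + 1` respectively, which are `ν`-integrable by the hypotheses on `ν`; the polynomial
part of `C` decays like `e^{-s}`.
-/

open MeasureTheory Real Set

namespace Complex

lemma abs_im_le_norm_one_sub_ofReal_mul_mul_norm (z : ℂ) (r : ℝ) :
    |z.im| ≤ ‖1 - r * z‖ * ‖z‖ := by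
  have him : ((1 - r * z) * (starRingEnd ℂ) z).im = -z.im := by
    simp only [mul_im, mul_re, sub_re, sub_im, one_re, one_im, ofReal_re, ofReal_im, conj_re,
      conj_im]
    ring
  calc |z.im| = |((1 - r * z) * (starRingEnd ℂ) z).im| := by rw [him, abs_neg]
    _ ≤ ‖(1 - r * z) * (starRingEnd ℂ) z‖ := abs_im_le_norm _
    _ = ‖1 - r * z‖ * ‖z‖ := by rw [norm_mul, RCLike.norm_conj]

lemma norm_one_sub_ofReal_mul_pos {z : ℂ} (hz : z.im ≠ 0) (r : ℝ) : 0 < ‖1 - r * z‖ := by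
  have hprod := abs_im_le_norm_one_sub_ofReal_mul_mul_norm z r
  by_contra! h
  rw [le_antisymm h (norm_nonneg _), zero_mul] at hprod
  exact hz (abs_nonpos_iff.1 hprod)

lemma norm_inv_one_sub_ofReal_mul_le {z : ℂ} (hz : z.im ≠ 0) (r : ℝ) :
    ‖(1 - r * z)⁻¹‖ ≤ ‖z‖ / |z.im| := by
  rw [norm_inv, le_div_iff₀ (abs_pos.2 hz), inv_mul_le_iff₀ (norm_one_sub_ofReal_mul_pos hz r)]
  exact abs_im_le_norm_one_sub_ofReal_mul_mul_norm z r

end Complex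

/-- `‖z‖ / |z.im|` bounds `‖(1 - r z)⁻¹‖` uniformly in `r : ℝ`; the other factor absorbs the
powers of `‖z‖` in the bounds below. -/
noncomputable def resolventConst (z : ℂ) : ℝ := (1 + ‖z‖ / |z.im|) * (1 + ‖z‖) ^ 2

lemma norm_pow_mul_le_resolventConst {z : ℂ} {c : ℝ} (hc : c ≤ 1 + ‖z‖ / |z.im|) {k : ℕ}
    (hk : k ≤ 2) : ‖z‖ ^ k * c ≤ resolventConst z := by
  rw [resolventConst, mul_comm]
  have hpow : ‖z‖ ^ k ≤ (1 + ‖z‖) ^ 2 :=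
    calc ‖z‖ ^ k ≤ (1 + ‖z‖) ^ k := by gcongr; linarith
      _ ≤ (1 + ‖z‖) ^ 2 := pow_le_pow_right₀ (by linarith [norm_nonneg z]) hk
  exact mul_le_mul hc hpow (by positivity) (by positivity)

lemma norm_inv_one_sub_ofReal_mul_sub_one_sub_le {z : ℂ} (hz : z.im ≠ 0) (r : ℝ) :
    ‖(1 - r * z)⁻¹ - 1 - r * z‖ ≤ resolventConst z * r ^ 2 := by
  have hne : 1 - r * z ≠ 0 := norm_pos_iff.1 (Complex.norm_one_sub_ofReal_mul_pos hz r)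
  have hid : (1 - r * z)⁻¹ - 1 - r * z = (r * z) ^ 2 * (1 - r * z)⁻¹ := by
    field_simp
    ring
  calc ‖(1 - r * z)⁻¹ - 1 - r * z‖ = r ^ 2 * (‖z‖ ^ 2 * ‖(1 - r * z)⁻¹‖) := by
        rw [hid, norm_mul, norm_pow, norm_mul, Complex.norm_real, Real.norm_eq_abs, mul_pow,
          sq_abs, mul_assoc]
    _ ≤ r ^ 2 * resolventConst z := by
        gcongr
        exact norm_pow_mul_le_resolventConst
          ((Complex.norm_inv_one_sub_ofReal_mul_le hz r).trans (by linarith)) le_rfl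
    _ = resolventConst z * r ^ 2 := mul_comm _ _

lemma norm_inv_one_sub_ofReal_mul_sub_one_le {z : ℂ} (hz : z.im ≠ 0) (r : ℝ) :
    ‖(1 - r * z)⁻¹ - 1‖ ≤ resolventConst z * min |r| 1 := by
  have hne : 1 - r * z ≠ 0 := norm_pos_iff.1 (Complex.norm_one_sub_ofReal_mul_pos hz r)
  have hinv := Complex.norm_inv_one_sub_ofReal_mul_le hz r
  rcases le_total |r| 1 with hr | hr
  · have hid : (1 - r * z)⁻¹ - 1 = r * z * (1 - r * z)⁻¹ := by
      field_simp
      ring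
    calc ‖(1 - r * z)⁻¹ - 1‖ = |r| * (‖z‖ ^ 1 * ‖(1 - r * z)⁻¹‖) := by
          rw [hid, norm_mul, norm_mul, Complex.norm_real, Real.norm_eq_abs, pow_one, mul_assoc]
      _ ≤ |r| * resolventConst z := by
          gcongr
          exact norm_pow_mul_le_resolventConst (hinv.trans (by linarith)) (by norm_num)
      _ = resolventConst z * min |r| 1 := by rw [min_eq_left hr, mul_comm]
  · calc ‖(1 - r * z)⁻¹ - 1‖ ≤ ‖z‖ ^ 0 * (1 + ‖z‖ / |z.im|) := by
          rw [pow_zero, one_mul, add_comm]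
          exact (norm_sub_le _ _).trans (by rw [norm_one]; gcongr)
      _ ≤ resolventConst z := norm_pow_mul_le_resolventConst le_rfl (by norm_num)
      _ = resolventConst z * min |r| 1 := by rw [min_eq_right hr, mul_one]

lemma resolventConst_nonneg (z : ℂ) : 0 ≤ resolventConst z := by
  unfold resolventConst
  positivity

noncomputable def levyIntegrand (w : ℂ) (x : ℝ) : ℂ :=
  1 / (1 - (x : ℂ) * w) - 1 - (x : ℂ) * w * (if |x| ≤ 1 then 1 else 0)

noncomputable def levyMajorant (t x : ℝ) : ℝ :=
  if |x| ≤ 1 then (t * x) ^ 2 else min |t * x| 1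

lemma measurable_levyMajorant : Measurable (Function.uncurry levyMajorant) := by
  unfold levyMajorant
  exact Measurable.ite (measurableSet_le (by fun_prop) measurable_const) (by fun_prop) (by fun_prop)

lemma norm_levyIntegrand_le {z : ℂ} (hz : z.im ≠ 0) (t x : ℝ) :
    ‖levyIntegrand (t * z) x‖ ≤ resolventConst z * levyMajorant t x := by
  have hmul : (x : ℂ) * (t * z) = ((t * x : ℝ) : ℂ) * z := by push_cast; ring
  unfold levyIntegrand levyMajorant
  rw [hmul, one_div]
  split_ifs
  · rw [mul_one]
    exact norm_inv_one_sub_ofReal_mul_sub_one_sub_le hz _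
  · rw [mul_zero, sub_zero]
    exact norm_inv_one_sub_ofReal_mul_sub_one_le hz _

lemma enorm_integral_levyIntegrand_le (ν : Measure ℝ) {z : ℂ} (hz : z.im ≠ 0) (t : ℝ) :
    ‖∫ x, levyIntegrand (t * z) x ∂ν‖ₑ
      ≤ ENNReal.ofReal (resolventConst z) * ∫⁻ x, ENNReal.ofReal (levyMajorant t x) ∂ν := by
  rw [← lintegral_const_mul' _ _ ENNReal.ofReal_ne_top]
  refine (enorm_integral_le_lintegral_enorm _).trans (lintegral_mono fun x => ?_)
  rw [← ofReal_norm, ← ENNReal.ofReal_mul (resolventConst_nonneg z)]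
  exact ENNReal.ofReal_le_ofReal (norm_levyIntegrand_le hz t x)

lemma lintegral_Ioi_ofReal_mul_exp_neg {c : ℝ} (hc : 0 ≤ c) (L : ℝ) :
    ∫⁻ s in Ioi L, ENNReal.ofReal (c * exp (-s)) = ENNReal.ofReal (c * exp (-L)) := by
  rw [← ofReal_integral_eq_lintegral_ofReal, integral_const_mul, integral_exp_neg_Ioi]
  · exact (integrableOn_exp_neg_Ioi L).const_mul c
  · exact Filter.Eventually.of_forall fun s => by positivity

lemma lintegral_Ioi_min_mul_exp_neg_le {y : ℝ} (hy : 0 < y) :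
    ∫⁻ s in Ioi 0, ENNReal.ofReal (min (y * exp (-s)) 1) ≤ ENNReal.ofReal (log y) + 1 := by
  set L := log y
  have hyL : y * exp (-L) = 1 := by rw [exp_neg, exp_log hy, mul_inv_cancel₀ hy.ne']
  calc ∫⁻ s in Ioi 0, ENNReal.ofReal (min (y * exp (-s)) 1)
      ≤ ∫⁻ s in Ioc 0 L ∪ Ioi L, ENNReal.ofReal (min (y * exp (-s)) 1) :=
        lintegral_mono_set fun s hs => (le_or_gt s L).imp (fun h => ⟨hs, h⟩) id
    _ ≤ (∫⁻ _ in Ioc 0 L, 1) + ∫⁻ s in Ioi L, ENNReal.ofReal (y * exp (-s)) := by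
        refine (lintegral_union_le _ _ _).trans (add_le_add ?_ ?_) <;>
          refine lintegral_mono fun s => ?_
        · exact ENNReal.ofReal_le_one.2 (min_le_right _ _)
        · exact ENNReal.ofReal_le_ofReal (min_le_left _ _)
    _ = ENNReal.ofReal L + 1 := by
        rw [setLIntegral_const, one_mul, Real.volume_Ioc, sub_zero,
          lintegral_Ioi_ofReal_mul_exp_neg hy.le, hyL, ENNReal.ofReal_one]

lemma lintegral_Ioi_levyMajorant_le (x : ℝ) :
    ∫⁻ s in Ioi 0, ENNReal.ofReal (levyMajorant (exp (-s)) x)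
      ≤ ENNReal.ofReal (min (x ^ 2) 1)
        + {x : ℝ | 1 < |x|}.indicator (fun x => ENNReal.ofReal (log (1 + |x|))) x := by
  unfold levyMajorant
  by_cases hx : |x| ≤ 1
  · have hx2 : x ^ 2 ≤ 1 := by nlinarith [sq_abs x, abs_nonneg x]
    simp only [if_pos hx]
    calc ∫⁻ s in Ioi 0, ENNReal.ofReal ((exp (-s) * x) ^ 2)
        ≤ ∫⁻ s in Ioi 0, ENNReal.ofReal (x ^ 2 * exp (-s)) := by
          refine setLIntegral_mono' measurableSet_Ioi fun s hs => ENNReal.ofReal_le_ofReal ?_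
          have h1 : exp (-s) ≤ 1 := exp_le_one_iff.2 (by linarith [mem_Ioi.1 hs])
          rw [mul_pow, mul_comm]
          gcongr
          nlinarith [exp_pos (-s)]
      _ = ENNReal.ofReal (min (x ^ 2) 1) := by
          rw [lintegral_Ioi_ofReal_mul_exp_neg (sq_nonneg x), neg_zero, exp_zero, mul_one,
            min_eq_left hx2]
      _ ≤ _ := le_self_add
  · rw [not_le] at hx
    have hx2 : 1 ≤ x ^ 2 := by nlinarith [sq_abs x, abs_nonneg x]
    simp only [if_neg hx.not_ge, abs_mul, abs_exp, mul_comm (exp _)]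
    rw [Set.indicator_of_mem (show x ∈ {x : ℝ | 1 < |x|} from hx), min_eq_right hx2,
      ENNReal.ofReal_one, add_comm]
    refine (lintegral_Ioi_min_mul_exp_neg_le (by linarith)).trans ?_
    gcongr
    linarith

lemma lintegral_Ioi_lintegral_levyMajorant_lt_top (ν : Measure ℝ) [SFinite ν]
    (hν1 : ∫⁻ x, ENNReal.ofReal (min (x ^ 2) 1) ∂ν < ⊤)
    (hνlog : ∫⁻ x in {x : ℝ | 1 < |x|}, ENNReal.ofReal (log (1 + |x|)) ∂ν < ⊤) :
    ∫⁻ s in Ioi 0, ∫⁻ x, ENNReal.ofReal (levyMajorant (exp (-s)) x) ∂ν < ⊤ := by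
  have hmeas : Measurable fun p : ℝ × ℝ => ENNReal.ofReal (levyMajorant (exp (-p.1)) p.2) :=
    (measurable_levyMajorant.comp
      (show Measurable fun p : ℝ × ℝ => (exp (-p.1), p.2) by fun_prop)).ennreal_ofReal
  have hset : MeasurableSet {x : ℝ | 1 < |x|} := measurableSet_lt measurable_const (by fun_prop)
  rw [lintegral_lintegral_swap hmeas.aemeasurable]
  calc ∫⁻ x, (∫⁻ s in Ioi 0, ENNReal.ofReal (levyMajorant (exp (-s)) x)) ∂ν
      ≤ ∫⁻ x, ENNReal.ofReal (min (x ^ 2) 1)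
          + {x : ℝ | 1 < |x|}.indicator (fun x => ENNReal.ofReal (log (1 + |x|))) x ∂ν :=
        lintegral_mono lintegral_Ioi_levyMajorant_le
    _ = (∫⁻ x, ENNReal.ofReal (min (x ^ 2) 1) ∂ν)
          + ∫⁻ x in {x : ℝ | 1 < |x|}, ENNReal.ofReal (log (1 + |x|)) ∂ν := by
        rw [lintegral_add_right _ ((by fun_prop : Measurable fun x : ℝ =>
          ENNReal.ofReal (log (1 + |x|))).indicator hset), lintegral_indicator hset]
    _ < ⊤ := ENNReal.add_lt_top.2 ⟨hν1, hνlog⟩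

lemma measure_le_abs_lt_top {ν : Measure ℝ} (hν1 : ∫⁻ x, ENNReal.ofReal (min (x ^ 2) 1) ∂ν < ⊤)
    {ε : ℝ} (hε : 0 < ε) : ν {x | ε ≤ |x|} < ⊤ := by
  have hc : 0 < min (ε ^ 2) 1 := by positivity
  calc ν {x | ε ≤ |x|}
      ≤ ν {x | ENNReal.ofReal (min (ε ^ 2) 1) ≤ ENNReal.ofReal (min (x ^ 2) 1)} := by
        refine measure_mono fun x hx => ENNReal.ofReal_le_ofReal ?_
        have : ε ^ 2 ≤ x ^ 2 := by nlinarith [sq_abs x, mem_ofPred_eq ▸ hx]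
        exact min_le_min_right 1 this
    _ ≤ (∫⁻ x, ENNReal.ofReal (min (x ^ 2) 1) ∂ν) / ENNReal.ofReal (min (ε ^ 2) 1) :=
        meas_ge_le_lintegral_div (by fun_prop) (ENNReal.ofReal_pos.2 hc).ne'
          ENNReal.ofReal_ne_top
    _ < ⊤ := ENNReal.div_lt_top hν1.ne (ENNReal.ofReal_pos.2 hc).ne'

lemma sigmaFinite_of_lintegral_min_sq_one_lt_top {ν : Measure ℝ} (hν0 : ν {0} = 0)
    (hν1 : ∫⁻ x, ENNReal.ofReal (min (x ^ 2) 1) ∂ν < ⊤) : SigmaFinite ν := by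
  refine Measure.sigmaFinite_of_countable
    (S := insert {0} (range fun n : ℕ => {x | 1 / (n + 1) ≤ |x|}))
    ((countable_range _).insert _) ?_ ?_
  · rintro s (rfl | ⟨n, rfl⟩)
    · simp [hν0]
    · exact measure_le_abs_lt_top hν1 (by positivity)
  · refine eq_univ_of_forall fun x => ?_
    rcases eq_or_ne x 0 with rfl | hx
    · exact mem_sUnion_of_mem (mem_singleton 0) (mem_insert _ _)
    · obtain ⟨n, hn⟩ := exists_nat_one_div_lt (abs_pos.2 hx)
      exact mem_sUnion_of_mem (mem_ofPred_eq ▸ hn.le) (mem_insert_of_mem _ ⟨n, rfl⟩)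

lemma norm_mul_add_mul_sq_le (η a : ℝ) (z : ℂ) {t : ℝ} (ht₀ : 0 ≤ t) (ht₁ : t ≤ 1) :
    ‖(η : ℂ) * (t * z) + (a : ℂ) * (t * z) ^ 2‖ ≤ (|η| * ‖z‖ + |a| * ‖z‖ ^ 2) * t := by
  have ht2 : t ^ 2 ≤ t := by nlinarith
  calc ‖(η : ℂ) * (t * z) + (a : ℂ) * (t * z) ^ 2‖
      ≤ |η| * ‖z‖ * t + |a| * ‖z‖ ^ 2 * t ^ 2 := by
        refine (norm_add_le _ _).trans_eq ?_
        simp only [norm_mul, norm_pow, Complex.norm_real, Real.norm_eq_abs, abs_of_nonneg ht₀]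
        ring
    _ ≤ (|η| * ‖z‖ + |a| * ‖z‖ ^ 2) * t := by
        rw [add_mul]
        gcongr

theorem stmt17_general (ν : Measure ℝ) (hν0 : ν {0} = 0)
    (hν1 : ∫⁻ x, ENNReal.ofReal (min (x ^ 2) 1) ∂ν < ⊤)
    (hνlog : ∫⁻ x in {x : ℝ | 1 < |x|}, ENNReal.ofReal (Real.log (1 + |x|)) ∂ν < ⊤)
    (a η : ℝ)
    (C : ℂ → ℂ)
    (hC : ∀ z, C z = (η : ℂ) * z + (a : ℂ) * z ^ 2
      + ∫ x, (1 / (1 - (x : ℂ) * z) - 1 - (x : ℂ) * z * (if |x| ≤ 1 then 1 else 0)) ∂ν) :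
    ∀ z : ℂ, z.im < 0 →
      ∫⁻ s in Set.Ioi (0 : ℝ), (‖C ((Real.exp (-s) : ℂ) * z)‖₊ : ENNReal) < ⊤ := by
  intro z hz
  have := sigmaFinite_of_lintegral_min_sq_one_lt_top hν0 hν1
  set A := |η| * ‖z‖ + |a| * ‖z‖ ^ 2
  have hA : 0 ≤ A := by positivity
  have hpointwise : ∀ s ∈ Ioi (0 : ℝ), (‖C ((exp (-s) : ℂ) * z)‖₊ : ENNReal)
      ≤ ENNReal.ofReal (A * exp (-s)) + ENNReal.ofReal (resolventConst z)
        * ∫⁻ x, ENNReal.ofReal (levyMajorant (exp (-s)) x) ∂ν := fun s hs => by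
    rw [← enorm_eq_nnnorm, hC]
    refine (enorm_add_le _ _).trans (add_le_add ?_ (enorm_integral_levyIntegrand_le ν hz.ne _))
    rw [← ofReal_norm]
    exact ENNReal.ofReal_le_ofReal (norm_mul_add_mul_sq_le η a z (exp_pos _).le
      (exp_le_one_iff.2 (by linarith [mem_Ioi.1 hs])))
  calc ∫⁻ s in Ioi 0, (‖C ((exp (-s) : ℂ) * z)‖₊ : ENNReal)
      ≤ ∫⁻ s in Ioi 0, ENNReal.ofReal (A * exp (-s)) + ENNReal.ofReal (resolventConst z)
          * ∫⁻ x, ENNReal.ofReal (levyMajorant (exp (-s)) x) ∂ν :=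
        setLIntegral_mono' measurableSet_Ioi hpointwise
    _ = ENNReal.ofReal (A * exp (-0)) + ENNReal.ofReal (resolventConst z)
          * ∫⁻ s in Ioi 0, ∫⁻ x, ENNReal.ofReal (levyMajorant (exp (-s)) x) ∂ν := by
        rw [lintegral_add_left (by fun_prop), lintegral_const_mul' _ _ ENNReal.ofReal_ne_top,
          lintegral_Ioi_ofReal_mul_exp_neg hA]
    _ < ⊤ := ENNReal.add_lt_top.2 ⟨ENNReal.ofReal_lt_top, ENNReal.mul_lt_top ENNReal.ofReal_lt_top
        (lintegral_Ioi_lintegral_levyMajorant_lt_top ν hν1 hνlog)⟩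

/-- If the free Lévy measure has a finite log-moment, then
`∫_0^∞ |C(e^{-t} z)| dt < ∞` for the free cumulant transform `C`. -/
theorem stmt17 (ν : Measure ℝ) (hν0 : ν {0} = 0)
    (hν1 : ∫⁻ x, ENNReal.ofReal (min (x ^ 2) 1) ∂ν < ⊤)
    (hνlog : ∫⁻ x in {x : ℝ | 1 < |x|}, ENNReal.ofReal (Real.log (1 + |x|)) ∂ν < ⊤)
    (a η : ℝ) (ha : 0 ≤ a)
    (C : ℂ → ℂ)
    (hC : ∀ z, C z = (η : ℂ) * z + (a : ℂ) * z ^ 2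
      + ∫ x, (1 / (1 - (x : ℂ) * z) - 1 - (x : ℂ) * z * (if |x| ≤ 1 then 1 else 0)) ∂ν) :
    ∀ z : ℂ, z.im < 0 →
      ∫⁻ s in Set.Ioi (0 : ℝ), (‖C ((Real.exp (-s) : ℂ) * z)‖₊ : ENNReal) < ⊤ :=
  stmt17_general ν hν0 hν1 hνlog a η C hC
end
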